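/- arXiv:1905.08173 — 11 statements merged into one kernel-verified Lean document; each statement's English description precedes it below -/
import Mathlib

section
/- If a set-valued mapping F defined by finitely many smooth inequality and equality constraints is R-regular at (p0, x0) relative to its domain, and the constraint functions h_i are locally Lipschitz in p uniformly near (p0, x0), then F is Lipschitz lower continuous at (p0, x0) relative to its domain: there exist l, δ > 0 such that dist(x0, F(p)) ≤ l‖p − p0‖ for all p in the δ-ball around p0 intersected with dom F. -/
/-- `max{0, h_i(p,x), i ∈ I, |h_i(p,x)|, i ∈ I0}` -/
noncomputable def constraintMax {ι G H : Type*} (h : ι → G → H → ℝ)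
    (I I0 : Finset ι) (p : G) (x : H) : ℝ :=
  sSup (insert (0:ℝ) ((fun i => h i p x) '' ↑I ∪ (fun i => |h i p x|) '' ↑I0))

/-- R-regularity relative to dom F plus local Lipschitz continuity in `p` of the constraint
functions implies lower Lipschitz continuity of `F` at `(p0, x0)` relative to dom F. -/
theorem stmt1 {G H ι : Type*} [NormedAddCommGroup G] [NormedSpace ℝ G]
    [NormedAddCommGroup H] [InnerProductSpace ℝ H] [Fintype ι] [DecidableEq ι]
    (h : ι → G → H → ℝ) (I I0 : Finset ι)
    (F : G → Set H)
    (hF : ∀ p, F p = {x | (∀ i ∈ I, h i p x ≤ 0) ∧ (∀ i ∈ I0, h i p x = 0)})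
    (p0 : G) (x0 : H) (hx0 : x0 ∈ F p0)
    (hcont : ∀ i, Continuous fun z : G × H => h i z.1 z.2)
    -- R-regularity at (p0,x0) relative to dom F
    (M : ℝ) (hM : 0 < M) (U : Set G) (hU : U ∈ nhds p0) (V : Set H) (hV : V ∈ nhds x0)
    (hreg : ∀ x ∈ V, ∀ p ∈ U, (F p).Nonempty →
      Metric.infDist x (F p) ≤ M * constraintMax h I I0 p x)
    -- the h_i are Lipschitz in p, uniformly near (p0, x0)
    (l : ι → ℝ) (W : Set G) (hW : W ∈ nhds p0) (Vx : Set H) (hVx : Vx ∈ nhds x0)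
    (hLip : ∀ i ∈ I ∪ I0, ∀ x ∈ Vx, ∀ p ∈ W, ∀ q ∈ W,
      |h i p x - h i q x| ≤ l i * ‖p - q‖) :
    ∃ lc > (0:ℝ), ∃ δ > (0:ℝ), ∀ p : G, ‖p - p0‖ < δ → (F p).Nonempty →
      Metric.infDist x0 (F p) ≤ lc * ‖p - p0‖ := by
  -- set up
  have hx0V : x0 ∈ V := mem_of_mem_nhds hV
  have hx0Vx : x0 ∈ Vx := mem_of_mem_nhds hVx
  have hp0W : p0 ∈ W := mem_of_mem_nhds hW
  set L : ℝ := ∑ i ∈ I ∪ I0, max (l i) 0 with hL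
  have hL0 : 0 ≤ L := Finset.sum_nonneg fun i _ => le_max_right _ _
  have hlL : ∀ i ∈ I ∪ I0, l i ≤ L := fun i hi =>
    le_trans (le_max_left _ _)
      (Finset.single_le_sum (f := fun i => max (l i) 0)
        (fun j _ => le_max_right _ _) hi)
  obtain ⟨δU, hδU, hUb⟩ := Metric.mem_nhds_iff.mp hU
  obtain ⟨δW, hδW, hWb⟩ := Metric.mem_nhds_iff.mp hW
  refine ⟨M * L + 1, by positivity, min δU δW, lt_min hδU hδW, fun p hp hFp => ?_⟩
  have hpU : p ∈ U := hUb (by simpa [dist_eq_norm] using lt_of_lt_of_le hp (min_le_left _ _))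
  have hpW : p ∈ W := hWb (by simpa [dist_eq_norm] using lt_of_lt_of_le hp (min_le_right _ _))
  rw [hF p0] at hx0
  obtain ⟨hI, hI0⟩ := hx0
  -- bound constraintMax
  have hcm : constraintMax h I I0 p x0 ≤ L * ‖p - p0‖ := by
    apply Real.sSup_le
    · rintro y (rfl | ⟨i, hi, rfl⟩ | ⟨i, hi, rfl⟩)
      · positivity
      · have hi' : i ∈ I ∪ I0 := Finset.mem_union_left _ hi
        have := hLip i hi' x0 hx0Vx p hpW p0 hp0W
        have h1 : h i p x0 - h i p0 x0 ≤ l i * ‖p - p0‖ := (abs_le.mp this).2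
        have h2 : l i * ‖p - p0‖ ≤ L * ‖p - p0‖ :=
          mul_le_mul_of_nonneg_right (hlL i hi') (norm_nonneg _)
        have := hI i hi
        linarith
      · have hi' : i ∈ I ∪ I0 := Finset.mem_union_right _ hi
        have h0 := hI0 i hi
        have := hLip i hi' x0 hx0Vx p hpW p0 hp0W
        rw [h0, sub_zero] at this
        exact this.trans (mul_le_mul_of_nonneg_right (hlL i hi') (norm_nonneg _))
    · positivity
  have hmain := hreg x0 hx0V p hpU hFp
  have : M * constraintMax h I I0 p x0 ≤ M * (L * ‖p - p0‖) :=
    mul_le_mul_of_nonneg_left hcm hM.le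
  nlinarith [norm_nonneg (p - p0)]
end

section
/- If a set-valued mapping F defined by finitely many constraint functions that are Lipschitz in the parameter is R-regular at (p0, x0) relative to its domain, then F is pseudo-Lipschitzian (Lipschitz-like/Aubin) at (p0, x0) relative to its domain: there exist l_F > 0 and neighborhoods V(p0), V(x0) such that F(p1) ∩ V(x0) ⊆ F(p2) + l_F‖p2 − p1‖·B for all p1, p2 ∈ V(p0) ∩ dom F, where B is the closed unit ball. -/
/-- If `F`, defined by constraint functions Lipschitz in the parameter, is R-regular at
`(p0, x0)` relative to dom F, then `F` is pseudo-Lipschitzian (Lipschitz-like / Aubin) at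
`(p0, x0)` relative to dom F. -/
theorem stmt2 {G H ι : Type*} [NormedAddCommGroup G] [NormedSpace ℝ G]
    [NormedAddCommGroup H] [InnerProductSpace ℝ H] [Fintype ι] [DecidableEq ι]
    (h : ι → G → H → ℝ) (I I0 : Finset ι)
    (F : G → Set H)
    (hF : ∀ p, F p = {x | (∀ i ∈ I, h i p x ≤ 0) ∧ (∀ i ∈ I0, h i p x = 0)})
    (p0 : G) (x0 : H) (hx0 : x0 ∈ F p0)
    (hcont : ∀ i, Continuous fun z : G × H => h i z.1 z.2)
    -- R-regularity at (p0,x0) relative to dom F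
    (M : ℝ) (hM : 0 < M) (U : Set G) (hU : U ∈ nhds p0) (V : Set H) (hV : V ∈ nhds x0)
    (hreg : ∀ x ∈ V, ∀ p ∈ U, (F p).Nonempty →
      Metric.infDist x (F p) ≤ M * constraintMax h I I0 p x)
    -- the h_i are Lipschitz on a product neighbourhood V(p0) × V(x0) with constants l_i
    (l : ι → ℝ) (W : Set G) (hW : W ∈ nhds p0) (Vx : Set H) (hVx : Vx ∈ nhds x0)
    (hLip : ∀ i ∈ I ∪ I0, ∀ p ∈ W, ∀ q ∈ W, ∀ x ∈ Vx, ∀ y ∈ Vx,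
      |h i p x - h i q y| ≤ l i * (‖p - q‖ + ‖x - y‖)) :
    ∃ lF > (0:ℝ), ∃ U' ∈ nhds p0, ∃ V' ∈ nhds x0,
      ∀ p1 ∈ U', ∀ p2 ∈ U', (F p1).Nonempty → (F p2).Nonempty →
        ∀ x ∈ F p1 ∩ V', ∃ y ∈ F p2, ‖x - y‖ ≤ lF * ‖p2 - p1‖ := by
  classical
  set L : ℝ := ∑ i ∈ I ∪ I0, |l i| with hLdef
  have hL0 : 0 ≤ L := Finset.sum_nonneg fun i _ => abs_nonneg _
  have hli : ∀ i ∈ I ∪ I0, l i ≤ L := fun i hi =>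
    le_trans (le_abs_self _) (Finset.single_le_sum (fun j _ => abs_nonneg (l j)) hi)
  have hlF : (0:ℝ) < M * L + 1 := by nlinarith
  refine ⟨M * L + 1, hlF, U ∩ W, Filter.inter_mem hU hW, V ∩ Vx,
    Filter.inter_mem hV hVx, ?_⟩
  rintro p1 ⟨hp1U, hp1W⟩ p2 ⟨hp2U, hp2W⟩ hne1 hne2 x ⟨hxF, hxV, hxVx⟩
  by_cases hpp : p1 = p2
  · refine ⟨x, hpp ▸ hxF, ?_⟩
    rw [sub_self, norm_zero]
    exact mul_nonneg hlF.le (norm_nonneg _)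
  have hnorm : 0 < ‖p2 - p1‖ := norm_pos_iff.mpr (sub_ne_zero.mpr (Ne.symm hpp))
  have hxc : (∀ i ∈ I, h i p1 x ≤ 0) ∧ (∀ i ∈ I0, h i p1 x = 0) := by
    rw [hF] at hxF; exact hxF
  -- bound on constraintMax at (p2, x)
  have hcm : constraintMax h I I0 p2 x ≤ L * ‖p2 - p1‖ := by
    apply csSup_le (Set.insert_nonempty _ _)
    rintro b hb
    rcases hb with rfl | hb
    · exact mul_nonneg hL0 (norm_nonneg _)
    rcases hb with ⟨i, hi, rfl⟩ | ⟨i, hi, rfl⟩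
    · have hlip := hLip i (Finset.mem_union_left _ hi) p2 hp2W p1 hp1W x hxVx x hxVx
      rw [sub_self, norm_zero, add_zero] at hlip
      have h1 : h i p2 x ≤ h i p1 x + l i * ‖p2 - p1‖ := by
        have := (abs_le.mp hlip).2; linarith
      have h2 : l i * ‖p2 - p1‖ ≤ L * ‖p2 - p1‖ :=
        mul_le_mul_of_nonneg_right (hli i (Finset.mem_union_left _ hi)) (norm_nonneg _)
      have h0 : h i p1 x ≤ 0 := hxc.1 i hi
      linarith
    · have hlip := hLip i (Finset.mem_union_right _ hi) p2 hp2W p1 hp1W x hxVx x hxVx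
      rw [sub_self, norm_zero, add_zero, hxc.2 i hi, sub_zero] at hlip
      exact le_trans hlip
        (mul_le_mul_of_nonneg_right (hli i (Finset.mem_union_right _ hi)) (norm_nonneg _))
  have hdist : Metric.infDist x (F p2) ≤ M * L * ‖p2 - p1‖ := by
    calc Metric.infDist x (F p2) ≤ M * constraintMax h I I0 p2 x :=
          hreg x hxV p2 hp2U hne2
      _ ≤ M * (L * ‖p2 - p1‖) := by
          exact mul_le_mul_of_nonneg_left hcm hM.le
      _ = M * L * ‖p2 - p1‖ := by ring
  have hlt : Metric.infDist x (F p2) < M * L * ‖p2 - p1‖ + ‖p2 - p1‖ := by linarith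
  obtain ⟨y, hyF, hdy⟩ := (Metric.infDist_lt_iff hne2).mp hlt
  refine ⟨y, hyF, ?_⟩
  rw [← dist_eq_norm]
  nlinarith [hdy]
end

section
/- Let v1, …, vn be vectors in a Hilbert space such that v1, …, vk (k ≤ n) are linearly independent, and let w = Σ_{i=1}^{k} a_i v_i + Σ_{i=k+1}^{n} b_i v_i with b_i ≥ 0 for i > k. Then there exist a subset K ⊆ {k+1,…,n} and coefficients a'_i (i ≤ k) and b'_i ≥ 0 (i ∈ K) such that w = Σ_{i=1}^{k} a'_i v_i + Σ_{i∈K} b'_i v_i and the family {v_1,…,v_k} ∪ {v_i : i ∈ K} is linearly independent. -/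
open Finset

/-- Carathéodory-type reduction lemma for conic-plus-linear combinations: a representation
`w = Σ_{i≤k} a_i v_i + Σ_{i>k} b_i v_i` with `b_i ≥ 0` (and `v_1,…,v_k` linearly independent)
can be replaced by one using a linearly independent subfamily, keeping the nonnegativity of
the coefficients on the conic part. -/
theorem stmt4 {H : Type*} [NormedAddCommGroup H] [InnerProductSpace ℝ H]
    (n k : ℕ) (hk : k ≤ n) (v : Fin n → H)
    (hli : LinearIndependent ℝ fun i : Fin k => v (Fin.castLE hk i))
    (w : H) (c : Fin n → ℝ) (hc : ∀ i : Fin n, k ≤ (i : ℕ) → 0 ≤ c i)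
    (hw : w = ∑ i, c i • v i) :
    ∃ (K : Finset (Fin n)) (c' : Fin n → ℝ),
      (∀ i ∈ K, k ≤ (i : ℕ)) ∧ (∀ i ∈ K, 0 ≤ c' i) ∧
      (∀ i : Fin n, k ≤ (i : ℕ) → i ∉ K → c' i = 0) ∧
      w = ∑ i, c' i • v i ∧
      LinearIndependent ℝ (fun i : {i : Fin n // (i : ℕ) < k ∨ i ∈ K} => v i) := by
  classical
  suffices aux : ∀ K : Finset (Fin n), ∀ c : Fin n → ℝ,
      (∀ i ∈ K, k ≤ (i : ℕ)) → (∀ i ∈ K, 0 ≤ c i) →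
      (∀ i : Fin n, k ≤ (i : ℕ) → i ∉ K → c i = 0) →
      w = ∑ i, c i • v i →
      ∃ (K' : Finset (Fin n)) (c' : Fin n → ℝ),
        (∀ i ∈ K', k ≤ (i : ℕ)) ∧ (∀ i ∈ K', 0 ≤ c' i) ∧
        (∀ i : Fin n, k ≤ (i : ℕ) → i ∉ K' → c' i = 0) ∧
        w = ∑ i, c' i • v i ∧
        LinearIndependent ℝ (fun i : {i : Fin n // (i : ℕ) < k ∨ i ∈ K'} => v i) by
    exact aux (univ.filter fun i => k ≤ (i : ℕ)) c (fun i hi => (mem_filter.mp hi).2)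
      (fun i hi => hc i (mem_filter.mp hi).2)
      (fun i hik hi => absurd (mem_filter.mpr ⟨mem_univ i, hik⟩) hi) hw
  intro K
  induction K using Finset.strongInductionOn with
  | _ K ih =>
  intro c hK1 hK2 hK3 hwc
  by_cases hind : LinearIndependent ℝ (fun i : {i : Fin n // (i : ℕ) < k ∨ i ∈ K} => v i)
  · exact ⟨K, c, hK1, hK2, hK3, hwc, hind⟩
  · obtain ⟨g, hg0, i₀, hi₀⟩ := Fintype.not_linearIndependent_iff.mp hind
    obtain ⟨lam, hlam⟩ : ∃ lam : Fin n → ℝ, lam = fun i : Fin n =>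
        if h : (i : ℕ) < k ∨ i ∈ K then g ⟨i, h⟩ else 0 := ⟨_, rfl⟩
    have hlamP : ∀ i : Fin n, ¬ ((i : ℕ) < k ∨ i ∈ K) → lam i = 0 := by
      intro i hi; rw [hlam]; exact dif_neg hi
    have hlamsub : ∀ i : {i : Fin n // (i : ℕ) < k ∨ i ∈ K}, lam i.1 = g i := by
      rintro ⟨i, hi⟩; rw [hlam]; exact dif_pos hi
    have hlamsum : ∑ i, lam i • v i = 0 := by
      calc ∑ i, lam i • v i
          = ∑ i ∈ univ.filter (fun i : Fin n => (i : ℕ) < k ∨ i ∈ K), lam i • v i := by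
            refine (Finset.sum_filter_of_ne ?_).symm
            intro i _ hne
            by_contra hPi
            exact hne (by rw [hlamP i hPi, zero_smul])
        _ = ∑ i : {i : Fin n // (i : ℕ) < k ∨ i ∈ K}, lam i.1 • v i.1 :=
            Finset.sum_subtype _ (by simp) _
        _ = ∑ i : {i : Fin n // (i : ℕ) < k ∨ i ∈ K}, g i • v i.1 := by
            refine Finset.sum_congr rfl fun i _ => by rw [hlamsub]
        _ = 0 := hg0
    have key : ∃ j ∈ K, lam j ≠ 0 := by
      by_contra hcon
      push_neg at hcon
      have hmap : (univ : Finset (Fin k)).map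
          ⟨Fin.castLE hk, Fin.castLE_injective hk⟩ =
          univ.filter (fun i : Fin n => (i : ℕ) < k) := by
        ext i
        simp only [mem_map, mem_univ, true_and, mem_filter, Function.Embedding.coeFn_mk]
        constructor
        · rintro ⟨j, rfl⟩; exact j.isLt
        · intro h; exact ⟨⟨(i : ℕ), h⟩, by ext; simp⟩
      have hsumk : ∑ i : Fin k, lam (Fin.castLE hk i) • v (Fin.castLE hk i) = 0 := by
        have h1 : ∑ i ∈ univ.filter (fun i : Fin n => (i : ℕ) < k), lam i • v i
            = ∑ i, lam i • v i := by
          refine Finset.sum_filter_of_ne ?_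
          intro i _ hne
          have hPi : (i : ℕ) < k ∨ i ∈ K := by
            by_contra hPi
            exact hne (by rw [hlamP i hPi, zero_smul])
          rcases hPi with h | h
          · exact h
          · exact absurd (by rw [hcon i h, zero_smul]) hne
        rw [← hlamsum, ← h1, ← hmap, Finset.sum_map]
        rfl
      have hall := Fintype.linearIndependent_iff.mp hli
        (fun i => lam (Fin.castLE hk i)) hsumk
      have hlami₀ : lam i₀.1 ≠ 0 := by rw [hlamsub]; exact hi₀
      rcases i₀.2 with h | h
      · have h2 := hall ⟨(i₀.1 : ℕ), h⟩
        have hcast : Fin.castLE hk ⟨(i₀.1 : ℕ), h⟩ = i₀.1 := by ext; simp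
        simp only [hcast] at h2
        exact hlami₀ h2
      · exact hlami₀ (hcon _ h)
    obtain ⟨j, hjK, hjlam⟩ := key
    -- normalize the sign of the relation
    set mu : Fin n → ℝ := if 0 < lam j then lam else -lam with hmu
    have hmuj : 0 < mu j := by
      rcases hjlam.lt_or_gt with h | h
      · simp only [hmu, if_neg (not_lt.mpr h.le), Pi.neg_apply]
        exact neg_pos.mpr h
      · simp only [hmu, if_pos h]
        exact h
    have hmusum : ∑ i, mu i • v i = 0 := by
      by_cases h : 0 < lam j
      · simp only [hmu, if_pos h]; exact hlamsum
      · simp only [hmu, if_neg h]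
        simp only [Pi.neg_apply, neg_smul, Finset.sum_neg_distrib]
        rw [hlamsum, neg_zero]
    have hmuP : ∀ i : Fin n, ¬ ((i : ℕ) < k ∨ i ∈ K) → mu i = 0 := by
      intro i hi
      by_cases h : 0 < lam j
      · simp only [hmu, if_pos h]; exact hlamP i hi
      · simp only [hmu, if_neg h, Pi.neg_apply]
        rw [hlamP i hi, neg_zero]
    set S := K.filter (fun i => 0 < mu i) with hS
    have hSne : S.Nonempty := ⟨j, mem_filter.mpr ⟨hjK, hmuj⟩⟩
    obtain ⟨j₀, hj₀S, hj₀min⟩ := S.exists_min_image (fun i => c i / mu i) hSne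
    have hj₀K : j₀ ∈ K := (mem_filter.mp hj₀S).1
    have hmuj₀ : 0 < mu j₀ := (mem_filter.mp hj₀S).2
    set t := c j₀ / mu j₀ with ht
    have ht0 : 0 ≤ t := div_nonneg (hK2 _ hj₀K) hmuj₀.le
    set c'' : Fin n → ℝ := fun i => c i - t * mu i with hc''
    have hsum'' : w = ∑ i, c'' i • v i := by
      rw [hwc]
      calc ∑ i, c i • v i
          = ∑ i, c i • v i - t • (∑ i, mu i • v i) := by
            rw [hmusum, smul_zero, sub_zero]
        _ = ∑ i, (c i - t * mu i) • v i := by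
            rw [Finset.smul_sum, ← Finset.sum_sub_distrib]
            exact Finset.sum_congr rfl fun i _ => by
              rw [sub_smul, mul_smul]
    refine ih (K.erase j₀) (Finset.erase_ssubset hj₀K) c''
      (fun i hi => hK1 i (Finset.mem_of_mem_erase hi)) ?_ ?_ hsum''
    · intro i hi
      have hiK := Finset.mem_of_mem_erase hi
      rcases le_or_gt (mu i) 0 with h | h
      · have : t * mu i ≤ 0 := mul_nonpos_of_nonneg_of_nonpos ht0 h
        have := hK2 i hiK
        simp only [hc'']
        linarith
      · have hiS : i ∈ S := mem_filter.mpr ⟨hiK, h⟩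
        have := hj₀min i hiS
        have : t * mu i ≤ c i := by
          rw [ht]
          calc c j₀ / mu j₀ * mu i ≤ c i / mu i * mu i := by
                apply mul_le_mul_of_nonneg_right (hj₀min i hiS) h.le
            _ = c i := div_mul_cancel₀ _ h.ne'
        simp only [hc'']
        linarith
    · intro i hik hi
      by_cases hij : i = j₀
      · subst hij
        simp only [hc'', ht]
        rw [div_mul_cancel₀ _ hmuj₀.ne']
        ring
      · have hiK : i ∉ K := fun h => hi (Finset.mem_erase.mpr ⟨hij, h⟩)
        have hPi : ¬ ((i : ℕ) < k ∨ i ∈ K) := by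
          rintro (h | h)
          · exact absurd hik (not_le.mpr h)
          · exact hiK h
        simp only [hc'', hK3 i hik hiK, hmuP i hPi, mul_zero, sub_zero]
end

section
/- Let F be given by finitely many smooth constraints and suppose x0 ∈ F(p0). Suppose there is M > 0 such that for any sequences p_k → p0 with p_k ∈ dom F and v_k → x0 with v_k ∉ F(p_k), and any metric projection x_k ∈ Π_{F(p_k)}(v_k), the Lagrange multiplier set Λ^M_{v_k}(p_k, x_k) is nonempty for k large; and suppose F is lower semicontinuous at (p0, x0) relative to dom F. Then F is R-regular: there exist M' > 0 and neighborhoods V(p0), V(x0) such that dist(x, F(p)) ≤ M'·max{0, h_i(p,x), i ∈ I, |h_i(p,x)|, i ∈ I0} for all x ∈ V(x0), p ∈ V(p0) ∩ dom F. -/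
open Metric Filter



set_option maxHeartbeats 1000000 in
/-- In a Hilbert space, points admitting a nearest point in a closed set are dense. -/
theorem exists_nearest_dense {H : Type*} [NormedAddCommGroup H] [InnerProductSpace ℝ H]
    [CompleteSpace H] (S : Set H) (hS : S.Nonempty) (hcl : IsClosed S) (v : H) (ε : ℝ)
    (hε : 0 < ε) : ∃ c x, dist c v ≤ ε ∧ x ∈ S ∧ ‖x - c‖ = Metric.infDist c S := by
  classical
  set B : ℝ := Metric.infDist v S + 2 with hB
  have hB0 : 0 < B := by
    have := Metric.infDist_nonneg (s := S) (x := v); positivity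
  set lam0 : ℝ := min (1/2) (ε / (2 * B)) with hlam0
  have hlam0pos : 0 < lam0 := by
    apply lt_min (by norm_num); positivity
  have hlam0le : lam0 ≤ 1/2 := min_le_left _ _
  set en : ℕ → ℝ := fun n => (1/2) * (1/4)^n with hen
  set lamn : ℕ → ℝ := fun n => lam0 * (1/2)^n with hlamn
  have henpos : ∀ n, 0 < en n := by intro n; simp only [hen]; positivity
  have hlampos : ∀ n, 0 < lamn n := by intro n; simp only [hlamn]; positivity
  have hlamle : ∀ n, lamn n ≤ 1/2 := by
    intro n
    calc lamn n ≤ lam0 * 1 := by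
          apply mul_le_mul_of_nonneg_left _ hlam0pos.le
          exact pow_le_one₀ (by norm_num) (by norm_num)
      _ ≤ 1/2 := by simpa using hlam0le
  -- the choice function
  have hpick : ∀ (cc : H) (n : ℕ), ∃ x, x ∈ S ∧ ‖x - cc‖^2 ≤ (infDist cc S)^2 + (en n)^2 := by
    intro cc n
    have hd0 : 0 ≤ infDist cc S := Metric.infDist_nonneg
    have hlt : infDist cc S < Real.sqrt ((infDist cc S)^2 + (en n)^2) := by
      have h1 : (infDist cc S)^2 < (infDist cc S)^2 + (en n)^2 := by
        nlinarith [henpos n]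
      calc infDist cc S = Real.sqrt ((infDist cc S)^2) := (Real.sqrt_sq hd0).symm
        _ < _ := Real.sqrt_lt_sqrt (by positivity) h1
    obtain ⟨y, hyS, hy⟩ := (Metric.infDist_lt_iff hS).1 hlt
    refine ⟨y, hyS, ?_⟩
    have h2 : ‖y - cc‖ < Real.sqrt ((infDist cc S)^2 + (en n)^2) := by
      rwa [dist_eq_norm, norm_sub_rev] at hy
    have h3 : 0 ≤ (infDist cc S)^2 + (en n)^2 := by positivity
    nlinarith [Real.sq_sqrt h3, norm_nonneg (y - cc), Real.sqrt_nonneg ((infDist cc S)^2 + (en n)^2)]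
  -- the sequences, made opaque
  obtain ⟨c, x, hc0, hcsucc, hxS, hrd⟩ :
      ∃ (c : ℕ → H) (x : ℕ → H), c 0 = v ∧
        (∀ n, c (n+1) = c n + lamn n • (x n - c n)) ∧ (∀ n, x n ∈ S) ∧
        (∀ n, ‖x n - c n‖^2 ≤ (infDist (c n) S)^2 + (en n)^2) := by
    choose pick hpickS hpickle using hpick
    exact ⟨fun n => Nat.rec v (fun n cn => cn + lamn n • (pick cn n - cn)) n,
      fun n => pick (Nat.rec v (fun n cn => cn + lamn n • (pick cn n - cn)) n) n,
      rfl, fun n => rfl, fun n => hpickS _ _, fun n => hpickle _ _⟩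
  have hdnn : ∀ n, 0 ≤ infDist (c n) S := fun n => Metric.infDist_nonneg
  have hrnn : ∀ n, (0:ℝ) ≤ ‖x n - c n‖ := fun n => norm_nonneg _
  have hdr : ∀ n, infDist (c n) S ≤ ‖x n - c n‖ := by
    intro n
    have h := Metric.infDist_le_dist_of_mem (x := c n) (hxS n)
    rwa [dist_eq_norm, norm_sub_rev] at h
  have hcx : ∀ n, c (n+1) - x n = (1 - lamn n) • (c n - x n) := by
    intro n; rw [hcsucc n]; module
  have hcdist1 : ∀ n, dist (c n) (c (n+1)) = lamn n * ‖x n - c n‖ := by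
    intro n
    rw [dist_eq_norm', hcsucc n, add_sub_cancel_left, norm_smul, Real.norm_eq_abs,
      abs_of_pos (hlampos n)]
  have hd1 : ∀ n, infDist (c (n+1)) S ≤ (1 - lamn n) * ‖x n - c n‖ := by
    intro n
    have h := Metric.infDist_le_dist_of_mem (x := c (n+1)) (hxS n)
    rw [dist_eq_norm, hcx n, norm_smul, Real.norm_eq_abs,
      abs_of_nonneg (by linarith [hlamle n]), norm_sub_rev] at h
    exact h
  -- norms bounded by B
  have hrB : ∀ n, ‖x n - c n‖ ≤ B := by
    have key : ∀ n, ‖x n - c n‖ ≤ ‖x 0 - c 0‖ + 1 - (1/4)^n := by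
      intro n
      induction n with
      | zero => norm_num
      | succ n ih =>
        have h4 : 0 ≤ (1 - lamn n) * ‖x n - c n‖ :=
          mul_nonneg (by linarith [hlamle n]) (hrnn n)
        have h1 : ‖x (n+1) - c (n+1)‖^2 ≤ ((1 - lamn n) * ‖x n - c n‖ + en (n+1))^2 := by
          have h2 := hd1 n
          have h3 := hdnn (n+1)
          nlinarith [henpos (n+1), hrd (n+1)]
        have h5 : ‖x (n+1) - c (n+1)‖ ≤ (1 - lamn n) * ‖x n - c n‖ + en (n+1) := by
          nlinarith [hrnn (n+1), henpos (n+1), h4]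
        have h6 : (1 - lamn n) * ‖x n - c n‖ ≤ ‖x n - c n‖ := by
          nlinarith [hrnn n, hlampos n]
        have h7 : en (n+1) = (1/2) * (1/4)^(n+1) := rfl
        have h8 : (0:ℝ) < (1/4:ℝ)^n := by positivity
        calc ‖x (n+1) - c (n+1)‖ ≤ ‖x n - c n‖ + (1/2) * (1/4)^(n+1) := by rw [← h7]; linarith
          _ ≤ ‖x 0 - c 0‖ + 1 - (1/4)^n + (1/2)*(1/4)^(n+1) := by linarith [ih]
          _ ≤ ‖x 0 - c 0‖ + 1 - (1/4)^(n+1) := by rw [pow_succ]; nlinarith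
    intro n
    have hd00 : infDist (c 0) S = infDist v S := by rw [hc0]
    have he0 : en 0 = 1/2 := by norm_num [hen]
    have hrd0 : ‖x 0 - c 0‖^2 ≤ (infDist v S)^2 + 1/4 := by
      have := hrd 0
      rw [hd00, he0] at this
      nlinarith
    have h00 : ‖x 0 - c 0‖ ≤ infDist v S + 1 := by
      nlinarith [hrnn 0, Metric.infDist_nonneg (s := S) (x := v), hrd0]
    have h9 : (0:ℝ) ≤ (1/4:ℝ)^n := by positivity
    have hkn := key n
    rw [hB]
    linarith
  -- c is Cauchy
  have hcdist : ∀ n, dist (c n) (c (n+1)) ≤ (lam0 * B) * (1/2)^n := by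
    intro n
    rw [hcdist1 n, hlamn]
    calc lam0 * (1/2)^n * ‖x n - c n‖ ≤ lam0 * (1/2)^n * B := by
          apply mul_le_mul_of_nonneg_left (hrB n) (by positivity)
      _ = lam0 * B * (1/2)^n := by ring
  have hcCauchy : CauchySeq c := cauchySeq_of_le_geometric (1/2) (lam0 * B) (by norm_num) hcdist
  obtain ⟨cstar, hcstar⟩ := cauchySeq_tendsto_of_complete hcCauchy
  -- key inequality for x-increments
  have hxkey : ∀ n, lamn n * ‖x (n+1) - x n‖^2 ≤ (en n)^2 + (en (n+1))^2 := by
    intro n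
    have key1 : c (n+1) - x (n+1) = (c n - x (n+1)) + lamn n • (x n - c n) := by
      rw [hcsucc n]; module
    have key2 : x n - x (n+1) = (c n - x (n+1)) + (x n - c n) := by abel
    have e1 : ‖(c n - x (n+1)) + lamn n • (x n - c n)‖^2
        = ‖c n - x (n+1)‖^2 + 2 * (lamn n * inner ℝ (c n - x (n+1)) (x n - c n))
          + (lamn n)^2 * ‖x n - c n‖^2 := by
      rw [norm_add_sq_real, real_inner_smul_right, norm_smul, Real.norm_eq_abs, mul_pow, sq_abs]
    have e2 : ‖(c n - x (n+1)) + (x n - c n)‖^2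
        = ‖c n - x (n+1)‖^2 + 2 * inner ℝ (c n - x (n+1)) (x n - c n) + ‖x n - c n‖^2 :=
      norm_add_sq_real _ _
    have b1 : ‖x (n+1) - c (n+1)‖^2 ≤ ((1 - lamn n) * ‖x n - c n‖)^2 + (en (n+1))^2 := by
      have h2 := hd1 n
      have h3 := hdnn (n+1)
      have h4 : 0 ≤ (1 - lamn n) * ‖x n - c n‖ :=
        mul_nonneg (by linarith [hlamle n]) (hrnn n)
      nlinarith [hrd (n+1)]
    have b3 : ‖x n - c n‖^2 - (en n)^2 ≤ ‖c n - x (n+1)‖^2 := by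
      have b2 : infDist (c n) S ≤ ‖c n - x (n+1)‖ := by
        have hh := Metric.infDist_le_dist_of_mem (x := c n) (hxS (n+1))
        rwa [dist_eq_norm] at hh
      nlinarith [hrd n, hdnn n, norm_nonneg (c n - x (n+1))]
    have b5 : ‖x (n+1) - c (n+1)‖ = ‖(c n - x (n+1)) + lamn n • (x n - c n)‖ := by
      rw [← key1, norm_sub_rev]
    have hx1 : ‖x (n+1) - x n‖^2
        = ‖c n - x (n+1)‖^2 + 2 * inner ℝ (c n - x (n+1)) (x n - c n) + ‖x n - c n‖^2 := by
      rw [norm_sub_rev, key2, e2]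
    have hr1 : ‖x (n+1) - c (n+1)‖^2
        = ‖c n - x (n+1)‖^2 + 2 * (lamn n * inner ℝ (c n - x (n+1)) (x n - c n))
          + (lamn n)^2 * ‖x n - c n‖^2 := by
      rw [b5, e1]
    have hl1 : 0 < lamn n := hlampos n
    have hl2 : lamn n ≤ 1/2 := hlamle n
    nlinarith [b1, b3, hr1, hx1, sq_nonneg (en n), sq_nonneg (‖x n - c n‖)]
  -- x is Cauchy
  set C : ℝ := Real.sqrt (1 / (2 * lam0)) with hC
  have hC0 : 0 ≤ C := Real.sqrt_nonneg _
  have hC2 : C^2 = 1 / (2 * lam0) := Real.sq_sqrt (by positivity)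
  have hxdist : ∀ n, dist (x n) (x (n+1)) ≤ C * (1/2)^n := by
    intro n
    have h1 := hxkey n
    have h2 : (dist (x n) (x (n+1)))^2 = ‖x (n+1) - x n‖^2 := by
      rw [dist_eq_norm, norm_sub_rev]
    have h3 : lamn n = lam0 * (1/2)^n := rfl
    have h4 : en n = (1/2)*(1/4)^n := rfl
    have h5 : en (n+1) = (1/2)*(1/4)^(n+1) := rfl
    have h8 : (0:ℝ) < (1/2:ℝ)^n := by positivity
    have h16 : ((1/4:ℝ))^n = (1/2)^n * (1/2)^n := by rw [← mul_pow]; norm_num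
    have key : (dist (x n) (x (n+1)))^2 ≤ (C * (1/2)^n)^2 := by
      have hCn : (C * (1/2)^n)^2 = (1/(2*lam0)) * ((1/2)^n)^2 := by
        rw [mul_pow, hC2]
      have h2n : ((1/2:ℝ)^n) ≤ 1 := pow_le_one₀ (by norm_num) (by norm_num)
      rw [h2, hCn]
      rw [h3, h4, h5] at h1
      have hl : 0 < lam0 := hlam0pos
      have expand : (1/2*(1/4:ℝ)^n)^2 + (1/2*(1/4)^(n+1))^2 = (17/64) * ((1/4)^n)^2 := by
        rw [pow_succ]; ring
      rw [expand, h16] at h1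
      have hnn : 0 ≤ ‖x (n+1) - x n‖^2 := by positivity
      rw [div_mul_eq_mul_div, le_div_iff₀ (by positivity)]
      nlinarith [mul_pos h8 h8, mul_pos hl h8]
    nlinarith [dist_nonneg (x := x n) (y := x (n+1)), mul_nonneg hC0 h8.le]
  have hxCauchy : CauchySeq x := cauchySeq_of_le_geometric (1/2) C (by norm_num) hxdist
  obtain ⟨xstar, hxstar⟩ := cauchySeq_tendsto_of_complete hxCauchy
  have hxstarS : xstar ∈ S := hcl.mem_of_tendsto hxstar (Filter.Eventually.of_forall hxS)
  refine ⟨cstar, xstar, ?_, hxstarS, ?_⟩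
  · -- distance from v
    have h1 : dist (c 0) cstar ≤ (lam0 * B) / (1 - 1/2) :=
      dist_le_of_le_geometric_of_tendsto₀ (1/2) (lam0 * B) (by norm_num) hcdist hcstar
    have h2 : lam0 ≤ ε / (2 * B) := min_le_right _ _
    have h3 : (lam0 * B) / (1 - 1/2 : ℝ) = 2 * lam0 * B := by ring
    rw [dist_comm, ← hc0]
    rw [h3] at h1
    calc dist (c 0) cstar ≤ 2 * lam0 * B := h1
      _ ≤ 2 * (ε / (2*B)) * B := by nlinarith
      _ = ε := by field_simp
  · -- nearest point property
    have hdistt : Tendsto (fun n => dist (x n) (c n)) atTop (nhds (dist xstar cstar)) :=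
      Tendsto.dist hxstar hcstar
    have hsq : Tendsto (fun n => (dist (x n) (c n))^2) atTop (nhds ((dist xstar cstar)^2)) :=
      hdistt.pow 2
    have hdt : Tendsto (fun n => infDist (c n) S) atTop (nhds (infDist cstar S)) :=
      ((Metric.continuous_infDist_pt S).tendsto cstar).comp hcstar
    have hent : Tendsto (fun n => (infDist (c n) S)^2 + (en n)^2) atTop
        (nhds ((infDist cstar S)^2 + 0)) := by
      apply Tendsto.add (hdt.pow 2)
      have hp : Tendsto (fun n : ℕ => (1/4:ℝ)^n) atTop (nhds 0) :=
        tendsto_pow_atTop_nhds_zero_of_lt_one (by norm_num) (by norm_num)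
      have h2 : Tendsto (fun n => (en n)^2) atTop (nhds (((1/2) * 0)^2)) :=
        ((hp.const_mul (1/2)).pow 2)
      simpa using h2
    have hineq : ∀ n, (dist (x n) (c n))^2 ≤ (infDist (c n) S)^2 + (en n)^2 := by
      intro n
      rw [dist_eq_norm]
      exact hrd n
    have hle : (dist xstar cstar)^2 ≤ (infDist cstar S)^2 + 0 :=
      le_of_tendsto_of_tendsto' hsq hent hineq
    have h1 : dist xstar cstar ≤ infDist cstar S := by
      nlinarith [dist_nonneg (x := xstar) (y := cstar), Metric.infDist_nonneg (s := S) (x := cstar)]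
    have h2 : infDist cstar S ≤ dist cstar xstar := Metric.infDist_le_dist_of_mem hxstarS
    rw [dist_comm] at h2
    rw [← dist_eq_norm]
    linarith



section cmax
variable {ι G H : Type*} (h : ι → G → H → ℝ) (I I0 : Finset ι) (p : G) (x : H)

lemma cmax_bddAbove :
    BddAbove (insert (0:ℝ) ((fun i => h i p x) '' ↑I ∪ (fun i => |h i p x|) '' ↑I0)) :=
  Set.Finite.bddAbove (Set.Finite.insert _
    ((I.finite_toSet.image _).union (I0.finite_toSet.image _)))

lemma constraintMax_nonneg : 0 ≤ constraintMax h I I0 p x :=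
  le_csSup (cmax_bddAbove h I I0 p x) (Set.mem_insert _ _)

lemma le_constraintMax_of_mem {i : ι} (hi : i ∈ I) :
    h i p x ≤ constraintMax h I I0 p x :=
  le_csSup (cmax_bddAbove h I I0 p x)
    (Set.mem_insert_of_mem _ (Or.inl ⟨i, Finset.mem_coe.2 hi, rfl⟩))

lemma abs_le_constraintMax_of_mem {i : ι} (hi : i ∈ I0) :
    |h i p x| ≤ constraintMax h I I0 p x :=
  le_csSup (cmax_bddAbove h I I0 p x)
    (Set.mem_insert_of_mem _ (Or.inr ⟨i, Finset.mem_coe.2 hi, rfl⟩))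

lemma constraintMax_le {b : ℝ} (hb : 0 ≤ b) (h1 : ∀ i ∈ I, h i p x ≤ b)
    (h2 : ∀ i ∈ I0, |h i p x| ≤ b) : constraintMax h I I0 p x ≤ b := by
  apply csSup_le (Set.insert_nonempty _ _)
  rintro y (rfl | (⟨i, hi, rfl⟩ | ⟨i, hi, rfl⟩))
  · exact hb
  · exact h1 i (Finset.mem_coe.1 hi)
  · exact h2 i (Finset.mem_coe.1 hi)

end cmax

/-- `Λ^M_v(p,x) ≠ ∅`: existence of Lagrange multipliers for the nearest-point problem with
total mass at most `M`. -/
def LagrangeBddNonempty {ι G H : Type*} [NormedAddCommGroup H] [InnerProductSpace ℝ H]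
    [DecidableEq ι] (h : ι → G → H → ℝ) (gradh : ι → G → H → H)
    (I I0 : Finset ι) (M : ℝ) (p : G) (v x : H) : Prop :=
  ∃ lam : ι → ℝ,
    ‖x - v‖⁻¹ • (x - v) + ∑ i ∈ I ∪ I0, lam i • gradh i p x = 0 ∧
    (∀ i ∈ I, 0 ≤ lam i ∧ lam i * h i p x = 0) ∧
    ∑ i ∈ I ∪ I0, |lam i| ≤ M

set_option maxHeartbeats 2000000 in
/-- Criterion of R-regularity (sufficiency): if `F` is lsc at `(p0,x0)` relative to dom F and
the Lagrange multiplier sets `Λ^M_{v_k}(p_k,x_k)` are nonempty along all sequences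
`p_k → p0`, `v_k → x0`, `v_k ∉ F(p_k)`, `x_k ∈ Π_{F(p_k)}(v_k)`, then `F` is R-regular at
`(p0,x0)` relative to dom F. -/
theorem stmt5 {G H ι : Type*} [NormedAddCommGroup G] [NormedSpace ℝ G]
    [NormedAddCommGroup H] [InnerProductSpace ℝ H] [CompleteSpace H] [Fintype ι] [DecidableEq ι]
    (h : ι → G → H → ℝ) (gradh : ι → G → H → H) (I I0 : Finset ι)
    (F : G → Set H)
    (hF : ∀ p, F p = {x | (∀ i ∈ I, h i p x ≤ 0) ∧ (∀ i ∈ I0, h i p x = 0)})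
    (p0 : G) (x0 : H) (hx0 : x0 ∈ F p0)
    (hcont : ∀ i, Continuous fun z : G × H => h i z.1 z.2)
    (hgradcont : ∀ i, Continuous fun z : G × H => gradh i z.1 z.2)
    (hgrad : ∀ i p x, HasGradientAt (h i p) (gradh i p x) x)
    -- lower semicontinuity of F at (p0,x0) relative to dom F
    (hlsc : ∀ V ∈ nhds x0, ∃ U ∈ nhds p0, ∀ p ∈ U, (F p).Nonempty → (F p ∩ V).Nonempty)
    -- uniform boundedness of multipliers along sequences
    (M : ℝ) (hM : 0 < M)
    (hmult : ∀ (p : ℕ → G) (v : ℕ → H) (x : ℕ → H),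
      Filter.Tendsto p Filter.atTop (nhds p0) → (∀ k, (F (p k)).Nonempty) →
      Filter.Tendsto v Filter.atTop (nhds x0) → (∀ k, v k ∉ F (p k)) →
      (∀ k, x k ∈ F (p k) ∧ ‖x k - v k‖ = Metric.infDist (v k) (F (p k))) →
      ∃ N : ℕ, ∀ k ≥ N, LagrangeBddNonempty h gradh I I0 M (p k) (v k) (x k)) :
    ∃ M' > (0:ℝ), ∃ U ∈ nhds p0, ∃ V ∈ nhds x0,
      ∀ x ∈ V, ∀ p ∈ U, (F p).Nonempty →
        Metric.infDist x (F p) ≤ M' * constraintMax h I I0 p x := by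
    classical
  by_contra hcon
  push_neg at hcon
  have hc1 : ∀ (i : ι) (p : G), Continuous fun y : H => h i p y := fun i p =>
    (hcont i).comp (continuous_const.prodMk continuous_id)
  have hFclosed : ∀ p, IsClosed (F p) := by
    intro p
    rw [hF p]
    have hset : {y : H | (∀ i ∈ I, h i p y ≤ 0) ∧ (∀ i ∈ I0, h i p y = 0)}
        = (⋂ i ∈ I, {y : H | h i p y ≤ 0}) ∩ ⋂ i ∈ I0, {y : H | h i p y = 0} := by
      ext y; simp [Set.mem_iInter]
    rw [hset]
    exact IsClosed.inter
      (isClosed_biInter fun i _ => isClosed_le (hc1 i p) continuous_const)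
      (isClosed_biInter fun i _ => isClosed_eq (hc1 i p) continuous_const)
  have hmemF : ∀ (p : G) (y : H), y ∈ F p ↔
      ((∀ i ∈ I, h i p y ≤ 0) ∧ (∀ i ∈ I0, h i p y = 0)) := by
    intro p y; rw [hF p]; exact Iff.rfl
  have hcpos : ∀ (p : G) (y : H), y ∉ F p → 0 < constraintMax h I I0 p y := by
    intro p y hy
    rcases (constraintMax_nonneg h I I0 p y).lt_or_eq with hlt | heq
    · exact hlt
    exfalso
    apply hy
    rw [hmemF]
    constructor
    · intro i hi
      have h1 := le_constraintMax_of_mem h I I0 p y hi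
      rw [← heq] at h1; exact h1
    · intro i hi
      have h1 := abs_le_constraintMax_of_mem h I I0 p y hi
      rw [← heq] at h1
      exact abs_eq_zero.1 (le_antisymm h1 (abs_nonneg _))
  -- per-k construction of bad points with exact metric projections
  have hstep : ∀ k : ℕ, ∃ (p : G) (v x : H),
      (F p).Nonempty ∧ dist p p0 ≤ 1/((k:ℝ)+1) ∧ dist v x0 ≤ 2/((k:ℝ)+1) ∧ v ∉ F p ∧
      x ∈ F p ∧ ‖x - v‖ = Metric.infDist v (F p) ∧ 0 < Metric.infDist v (F p) ∧
      Metric.infDist v (F p) ≤ 3/((k:ℝ)+1) ∧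
      ((k:ℝ)+1) * constraintMax h I I0 p v ≤ 3 * Metric.infDist v (F p) := by
    intro k
    have hkpos : (0:ℝ) < 1/((k:ℝ)+1) := by positivity
    obtain ⟨U, hU, hUprop⟩ := hlsc (Metric.ball x0 (1/((k:ℝ)+1))) (Metric.ball_mem_nhds _ hkpos)
    obtain ⟨v, hvV, p, hpU, hFne, hlt⟩ := hcon ((k:ℝ)+1) (by positivity)
      (U ∩ Metric.ball p0 (1/((k:ℝ)+1))) (Filter.inter_mem hU (Metric.ball_mem_nhds _ hkpos))
      (Metric.ball x0 (1/((k:ℝ)+1))) (Metric.ball_mem_nhds _ hkpos)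
    have hc0 : 0 ≤ constraintMax h I I0 p v := constraintMax_nonneg h I I0 p v
    have hd0 : 0 < Metric.infDist v (F p) :=
      lt_of_le_of_lt (mul_nonneg (by positivity) hc0) hlt
    have hd2 : Metric.infDist v (F p) ≤ 2/((k:ℝ)+1) := by
      obtain ⟨y, hyF, hyB⟩ := hUprop p hpU.1 hFne
      have h1 : dist v x0 < 1/((k:ℝ)+1) := Metric.mem_ball.1 hvV
      have h2 : dist y x0 < 1/((k:ℝ)+1) := Metric.mem_ball.1 hyB
      calc Metric.infDist v (F p) ≤ dist v y := Metric.infDist_le_dist_of_mem hyF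
        _ ≤ dist v x0 + dist x0 y := dist_triangle _ _ _
        _ ≤ 1/((k:ℝ)+1) + 1/((k:ℝ)+1) := by rw [dist_comm x0 y]; linarith
        _ = 2/((k:ℝ)+1) := by ring
    set d := Metric.infDist v (F p) with hd
    have hη : 0 < d/(2*((k:ℝ)+1)) := by positivity
    have hev : ∀ᶠ w in nhds v, ∀ i ∈ I ∪ I0, |h i p w - h i p v| < d/(2*((k:ℝ)+1)) := by
      rw [Filter.eventually_all_finset]
      intro i _
      have ht : Filter.Tendsto (fun w : H => |h i p w - h i p v|) (nhds v) (nhds 0) := by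
        have hcg : Continuous fun w : H => |h i p w - h i p v| :=
          ((hc1 i p).sub continuous_const).abs
        have := hcg.tendsto v
        simpa using this
      exact ht.eventually_lt_const hη
    obtain ⟨δ, hδpos, hδ⟩ := Metric.eventually_nhds_iff.1 hev
    have hε'pos : 0 < min (min (δ/2) (d/2)) (1/((k:ℝ)+1)) :=
      lt_min (lt_min (by positivity) (by positivity)) hkpos
    set ε' := min (min (δ/2) (d/2)) (1/((k:ℝ)+1)) with hε'
    obtain ⟨v', x', hv'd, hx'F, hx'n⟩ := exists_nearest_dense (F p) hFne (hFclosed p) v ε' hε'pos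
    have hε'δ : ε' ≤ δ/2 := le_trans (min_le_left _ _) (min_le_left _ _)
    have hε'd : ε' ≤ d/2 := le_trans (min_le_left _ _) (min_le_right _ _)
    have hε'k : ε' ≤ 1/((k:ℝ)+1) := min_le_right _ _
    set d' := Metric.infDist v' (F p) with hd'
    have hd'lb : d - ε' ≤ d' := by
      have h1 : Metric.infDist v (F p) ≤ Metric.infDist v' (F p) + dist v v' :=
        Metric.infDist_le_infDist_add_dist
      rw [dist_comm] at h1
      rw [← hd, ← hd'] at h1
      linarith
    have hd'pos : 0 < d' := by linarith
    have hd'ub : d' ≤ 3/((k:ℝ)+1) := by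
      have h1 : Metric.infDist v' (F p) ≤ Metric.infDist v (F p) + dist v' v :=
        Metric.infDist_le_infDist_add_dist
      rw [← hd, ← hd'] at h1
      have h2 : (2:ℝ)/((k:ℝ)+1) + 1/((k:ℝ)+1) = 3/((k:ℝ)+1) := by ring
      linarith
    have hvx0 : dist v' x0 ≤ 2/((k:ℝ)+1) := by
      have h1 : dist v x0 < 1/((k:ℝ)+1) := Metric.mem_ball.1 hvV
      calc dist v' x0 ≤ dist v' v + dist v x0 := dist_triangle _ _ _
        _ ≤ 1/((k:ℝ)+1) + 1/((k:ℝ)+1) := by linarith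
        _ = 2/((k:ℝ)+1) := by ring
    have hv'not : v' ∉ F p := by
      intro hmem
      have h1 := Metric.infDist_zero_of_mem hmem
      rw [← hd'] at h1
      linarith
    have hball2 : ∀ i ∈ I ∪ I0, |h i p v' - h i p v| < d/(2*((k:ℝ)+1)) := by
      have hdist : dist v' v < δ := lt_of_le_of_lt hv'd (by linarith)
      exact hδ hdist
    have hcm : constraintMax h I I0 p v' ≤ constraintMax h I I0 p v + d/(2*((k:ℝ)+1)) := by
      apply constraintMax_le h I I0 p v' (by linarith)
      · intro i hi
        have h1 := hball2 i (Finset.mem_union_left _ hi)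
        have h2 := le_constraintMax_of_mem h I I0 p v hi
        have h3 := le_abs_self (h i p v' - h i p v)
        linarith [abs_lt.1 h1]
      · intro i hi
        have h1 := hball2 i (Finset.mem_union_right _ hi)
        have h2 := abs_le_constraintMax_of_mem h I I0 p v hi
        have h3 := abs_sub_abs_le_abs_sub (h i p v') (h i p v)
        linarith
    have hfinal : ((k:ℝ)+1) * constraintMax h I I0 p v' ≤ 3 * d' := by
      have hkp : (0:ℝ) < (k:ℝ)+1 := by positivity
      have h1 : ((k:ℝ)+1) * constraintMax h I I0 p v'
          ≤ ((k:ℝ)+1) * (constraintMax h I I0 p v + d/(2*((k:ℝ)+1))) :=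
        mul_le_mul_of_nonneg_left hcm hkp.le
      have h2 : ((k:ℝ)+1) * (constraintMax h I I0 p v + d/(2*((k:ℝ)+1)))
          = ((k:ℝ)+1) * constraintMax h I I0 p v + d/2 := by
        field_simp
      have h3 : ((k:ℝ)+1) * constraintMax h I I0 p v < d := hlt
      linarith
    have hppd : dist p p0 ≤ 1/((k:ℝ)+1) := (Metric.mem_ball.1 hpU.2).le
    exact ⟨p, v', x', hFne, hppd, hvx0, hv'not, hx'F, hx'n, hd'pos, hd'ub, hfinal⟩
  choose pp vv xx hne hpdist hvdist hnot hmem hproj hdpos hdub hratio using hstep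
  have hlim1 : Filter.Tendsto (fun k : ℕ => 1/((k:ℝ)+1)) Filter.atTop (nhds 0) :=
    tendsto_one_div_add_atTop_nhds_zero_nat
  have htp : Filter.Tendsto pp Filter.atTop (nhds p0) := by
    rw [tendsto_iff_dist_tendsto_zero]
    exact squeeze_zero (fun k => dist_nonneg) hpdist hlim1
  have htv : Filter.Tendsto vv Filter.atTop (nhds x0) := by
    rw [tendsto_iff_dist_tendsto_zero]
    refine squeeze_zero (fun k => dist_nonneg) hvdist ?_
    have h1 := hlim1.const_mul (2:ℝ)
    simpa [mul_one_div, div_eq_mul_inv] using h1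
  obtain ⟨N, hN⟩ := hmult pp vv xx htp hne htv hnot (fun k => ⟨hmem k, hproj k⟩)
  have hMη : (0:ℝ) < 1/(4*M) := by
    apply div_pos one_pos; linarith
  have hgev : ∀ᶠ z : G × H in nhds (p0, x0),
      ∀ i ∈ I ∪ I0, ‖gradh i z.1 z.2 - gradh i p0 x0‖ < 1/(4*M) := by
    rw [Filter.eventually_all_finset]
    intro i _
    have ht : Filter.Tendsto (fun z : G × H => ‖gradh i z.1 z.2 - gradh i p0 x0‖)
        (nhds (p0, x0)) (nhds 0) := by
      have hcg : Continuous fun z : G × H => ‖gradh i z.1 z.2 - gradh i p0 x0‖ :=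
        ((hgradcont i).sub continuous_const).norm
      have := hcg.tendsto (p0, x0)
      simpa using this
    exact ht.eventually_lt_const hMη
  obtain ⟨δg, hδgpos, hδg⟩ := Metric.eventually_nhds_iff.1 hgev
  obtain ⟨K0, hK0⟩ := exists_nat_gt (max (6*M) (5/δg))
  set K := max K0 N with hKdef
  have hKN : N ≤ K := le_max_right _ _
  have hKr : (K0:ℝ) ≤ (K:ℝ) := Nat.cast_le.2 (le_max_left _ _)
  have hK6 : 6*M < (K:ℝ)+1 := by
    have := le_max_left (6*M) (5/δg); linarith
  have hKpos : (0:ℝ) < (K:ℝ)+1 := by positivity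
  have hKδ : 5/((K:ℝ)+1) < δg := by
    have h1 : 5/δg < (K:ℝ)+1 := by
      have := le_max_right (6*M) (5/δg); linarith
    have h2 : (5:ℝ) < ((K:ℝ)+1)*δg := (div_lt_iff₀ hδgpos).1 h1
    rw [div_lt_iff₀ hKpos]
    linarith [mul_comm ((K:ℝ)+1) δg]
  obtain ⟨lam, hstat, hIlam, hlamsum⟩ := hN K hKN
  set p := pp K with hpdef
  set v := vv K with hvdef
  set x := xx K with hxdef
  set d := ‖x - v‖ with hddef
  have hdinf : d = Metric.infDist v (F p) := hproj K
  have hdpos' : 0 < d := by rw [hdinf]; exact hdpos K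
  set c' := constraintMax h I I0 p v with hc'def
  have hc'pos : 0 < c' := hcpos p v (hnot K)
  have hc'nn : 0 ≤ c' := hc'pos.le
  have hvx0K : dist v x0 ≤ 2/((K:ℝ)+1) := hvdist K
  have hdK : d ≤ 3/((K:ℝ)+1) := by rw [hdinf]; exact hdub K
  have hxx0 : dist x x0 ≤ 5/((K:ℝ)+1) := by
    have h1 : dist x v = d := by rw [hddef, dist_eq_norm]
    calc dist x x0 ≤ dist x v + dist v x0 := dist_triangle _ _ _
      _ ≤ 3/((K:ℝ)+1) + 2/((K:ℝ)+1) := by rw [h1]; linarith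
      _ = 5/((K:ℝ)+1) := by ring
  have h25 : (2:ℝ)/((K:ℝ)+1) ≤ 5/((K:ℝ)+1) := by
    gcongr
    norm_num
  have hvx0K' : dist v x0 ≤ 5/((K:ℝ)+1) := le_trans hvx0K h25
  have hsegball : ∀ t : ℝ, 0 ≤ t → t ≤ 1 →
      ∀ i ∈ I ∪ I0, ‖gradh i p (x + t•(v-x)) - gradh i p0 x0‖ < 1/(4*M) := by
    intro t ht0 ht1 i hi
    have hdlt : dist ((p, x + t•(v-x)) : G × H) (p0, x0) < δg := by
      rw [Prod.dist_eq]
      apply max_lt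
      · show dist p p0 < δg
        have h1 : dist p p0 ≤ 1/((K:ℝ)+1) := hpdist K
        have h2 : (1:ℝ)/((K:ℝ)+1) ≤ 5/((K:ℝ)+1) := by
          gcongr
          norm_num
        linarith
      · show dist (x + t•(v-x)) x0 < δg
        have heq : x + t•(v-x) - x0 = (1-t)•(x-x0) + t•(v-x0) := by module
        have h3 : dist (x + t•(v-x)) x0 ≤ 5/((K:ℝ)+1) := by
          rw [dist_eq_norm, heq]
          have h4 : ‖x - x0‖ ≤ 5/((K:ℝ)+1) := by rw [← dist_eq_norm]; exact hxx0
          have h5 : ‖v - x0‖ ≤ 5/((K:ℝ)+1) := by rw [← dist_eq_norm]; exact hvx0K'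
          calc ‖(1-t)•(x-x0) + t•(v-x0)‖ ≤ ‖(1-t)•(x-x0)‖ + ‖t•(v-x0)‖ := norm_add_le _ _
            _ = (1-t)*‖x-x0‖ + t*‖v-x0‖ := by
              rw [norm_smul, norm_smul, Real.norm_eq_abs, Real.norm_eq_abs,
                abs_of_nonneg (by linarith : (0:ℝ) ≤ 1-t), abs_of_nonneg ht0]
            _ ≤ (1-t)*(5/((K:ℝ)+1)) + t*(5/((K:ℝ)+1)) := by
              apply add_le_add
              · exact mul_le_mul_of_nonneg_left h4 (by linarith)
              · exact mul_le_mul_of_nonneg_left h5 ht0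
            _ = 5/((K:ℝ)+1) := by ring
        linarith
    exact hδg hdlt i hi
  have hkey : ∀ i ∈ I ∪ I0,
      lam i * (inner ℝ (gradh i p x) (v - x) : ℝ) ≤ |lam i| * (c' + 2*(1/(4*M))*d) := by
    intro i hi
    have hderiv : ∀ t : ℝ,
        HasDerivAt (fun s : ℝ => h i p (x + s•(v-x)))
          (inner ℝ (gradh i p (x + t•(v-x))) (v - x) : ℝ) t := by
      intro t
      have h1 : HasDerivAt (fun s : ℝ => s • (v-x)) ((1:ℝ) • (v-x)) t :=
        (hasDerivAt_id t).smul_const (v-x)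
      rw [one_smul] at h1
      have hline : HasDerivAt (fun s : ℝ => x + s • (v-x)) (v-x) t := h1.const_add x
      have hg := hgrad i p (x + t•(v-x))
      rw [hasGradientAt_iff_hasFDerivAt] at hg
      have h2 := hg.comp_hasDerivAt t hline
      simpa [InnerProductSpace.toDual_apply_apply, Function.comp_def] using h2
    have hcontf : ContinuousOn (fun s : ℝ => h i p (x + s•(v-x))) (Set.Icc 0 1) := by
      apply Continuous.continuousOn
      exact (hcont i).comp (continuous_const.prodMk
        (continuous_const.add (continuous_id.smul continuous_const)))
    obtain ⟨t, htIoo, hslope⟩ :=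
      exists_hasDerivAt_eq_slope (fun s : ℝ => h i p (x + s•(v-x))) _ one_pos hcontf
        (fun t _ => hderiv t)
    have hf1 : h i p (x + (1:ℝ)•(v-x)) = h i p v := by
      have he : x + (1:ℝ)•(v-x) = v := by module
      rw [he]
    have hf0 : h i p (x + (0:ℝ)•(v-x)) = h i p x := by
      have he : x + (0:ℝ)•(v-x) = x := by module
      rw [he]
    have hslope' : (inner ℝ (gradh i p (x + t•(v-x))) (v - x) : ℝ) = h i p v - h i p x := by
      rw [hslope]
      simp only [hf1, hf0]
      norm_num
    have hgx : ‖gradh i p x - gradh i p0 x0‖ < 1/(4*M) := by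
      have he : x + (0:ℝ)•(v-x) = x := by module
      have h1 := hsegball 0 le_rfl zero_le_one i hi
      rwa [he] at h1
    have hgξ : ‖gradh i p (x + t•(v-x)) - gradh i p0 x0‖ < 1/(4*M) :=
      hsegball t htIoo.1.le htIoo.2.le i hi
    have herr : ‖gradh i p x - gradh i p (x + t•(v-x))‖ ≤ 2*(1/(4*M)) := by
      have h1 := dist_triangle (gradh i p x) (gradh i p0 x0) (gradh i p (x + t•(v-x)))
      rw [dist_eq_norm, dist_eq_norm, dist_eq_norm] at h1
      have h2 : ‖gradh i p0 x0 - gradh i p (x + t•(v-x))‖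
          = ‖gradh i p (x + t•(v-x)) - gradh i p0 x0‖ := norm_sub_rev _ _
      linarith
    have hvxd : ‖v - x‖ = d := by rw [hddef, norm_sub_rev]
    have hcs : |(inner ℝ (gradh i p x - gradh i p (x + t•(v-x))) (v-x) : ℝ)|
        ≤ (2*(1/(4*M)))*d := by
      calc |(inner ℝ (gradh i p x - gradh i p (x + t•(v-x))) (v-x) : ℝ)|
          ≤ ‖gradh i p x - gradh i p (x + t•(v-x))‖ * ‖v-x‖ := abs_real_inner_le_norm _ _
        _ ≤ (2*(1/(4*M)))*d := by
            rw [hvxd]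
            exact mul_le_mul_of_nonneg_right herr (by rw [← hvxd]; exact norm_nonneg _)
    have hsplit : lam i * (inner ℝ (gradh i p x) (v - x) : ℝ)
        = lam i * (h i p v - h i p x)
          + lam i * (inner ℝ (gradh i p x - gradh i p (x + t•(v-x))) (v-x) : ℝ) := by
      rw [inner_sub_left, hslope']
      ring
    have hA : lam i * (h i p v - h i p x) ≤ |lam i| * c' := by
      by_cases hiI : i ∈ I
      · obtain ⟨hl0, hlh⟩ := hIlam i hiI
        have h1 : h i p v ≤ c' := le_constraintMax_of_mem h I I0 p v hiI
        have h2 : lam i * (h i p v - h i p x) = lam i * h i p v - lam i * h i p x := by ring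
        rw [h2, hlh, sub_zero, abs_of_nonneg hl0]
        exact mul_le_mul_of_nonneg_left h1 hl0
      · have hiI0 : i ∈ I0 := (Finset.mem_union.1 hi).resolve_left hiI
        have hx0' : h i p x = 0 := ((hmemF p x).1 (hmem K)).2 i hiI0
        rw [hx0', sub_zero]
        calc lam i * h i p v ≤ |lam i * h i p v| := le_abs_self _
          _ = |lam i| * |h i p v| := abs_mul _ _
          _ ≤ |lam i| * c' := mul_le_mul_of_nonneg_left
              (abs_le_constraintMax_of_mem h I I0 p v hiI0) (abs_nonneg _)
    have hB : lam i * (inner ℝ (gradh i p x - gradh i p (x + t•(v-x))) (v-x) : ℝ)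
        ≤ |lam i| * (2*(1/(4*M))*d) := by
      calc lam i * (inner ℝ (gradh i p x - gradh i p (x + t•(v-x))) (v-x) : ℝ)
          ≤ |lam i * (inner ℝ (gradh i p x - gradh i p (x + t•(v-x))) (v-x) : ℝ)| :=
            le_abs_self _
        _ = |lam i| * |(inner ℝ (gradh i p x - gradh i p (x + t•(v-x))) (v-x) : ℝ)| :=
            abs_mul _ _
        _ ≤ |lam i| * (2*(1/(4*M))*d) := mul_le_mul_of_nonneg_left hcs (abs_nonneg _)
    have hdistrib : |lam i| * (c' + 2*(1/(4*M))*d)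
        = |lam i| * c' + |lam i| * (2*(1/(4*M))*d) := by ring
    rw [hsplit, hdistrib]
    exact add_le_add hA hB
  -- the stationarity identity
  have hsum : d = ∑ i ∈ I ∪ I0, lam i * (inner ℝ (gradh i p x) (v - x) : ℝ) := by
    have h1 := congrArg (fun w : H => (inner ℝ w (v - x) : ℝ)) hstat
    simp only [inner_add_left, sum_inner, real_inner_smul_left, inner_zero_left] at h1
    have h2 : (inner ℝ (x - v) (v - x) : ℝ) = -(d^2) := by
      have hxv : x - v = -(v - x) := (neg_sub v x).symm
      rw [hxv, inner_neg_left, real_inner_self_eq_norm_sq, norm_sub_rev]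
    rw [h2] at h1
    have h3 : d⁻¹ * -(d^2) = -d := by
      field_simp
    linarith
  have hsumle : d ≤ M * (c' + 2*(1/(4*M))*d) := by
    have hcd : (0:ℝ) ≤ c' + 2*(1/(4*M))*d :=
      add_nonneg hc'nn (mul_nonneg (by positivity) hdpos'.le)
    calc d = ∑ i ∈ I ∪ I0, lam i * (inner ℝ (gradh i p x) (v - x) : ℝ) := hsum
      _ ≤ ∑ i ∈ I ∪ I0, |lam i| * (c' + 2*(1/(4*M))*d) := Finset.sum_le_sum hkey
      _ = (∑ i ∈ I ∪ I0, |lam i|) * (c' + 2*(1/(4*M))*d) := by rw [Finset.sum_mul]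
      _ ≤ M * (c' + 2*(1/(4*M))*d) := mul_le_mul_of_nonneg_right hlamsum hcd
  have hsimp : M * (c' + 2*(1/(4*M))*d) = M*c' + d/2 := by
    field_simp
    ring
  have hd2M : d ≤ 2*M*c' := by
    rw [hsimp] at hsumle
    linarith
  have hratioK : ((K:ℝ)+1) * c' ≤ 3 * d := by
    rw [hdinf]
    exact hratio K
  have hfin : 6*M*c' < ((K:ℝ)+1)*c' := mul_lt_mul_of_pos_right hK6 hc'pos
  linarith
end

section
/- Let v, x_k, v_k ∈ H with x_k a nearest point to v_k in F(p_k) and suppose the KKT-type identity (x_k − v_k)/‖x_k − v_k‖ + Σ_i λ_i^k ∇_x h_i(p_k, x_k) = 0 holds with λ_i^k ≥ 0 and λ_i^k h_i(p_k, x_k) = 0 for i ∈ I, and Σ_i |λ_i^k| ≤ M. If each h_i(p_k, ·) is differentiable at x_k with derivative ∇_x h_i(p_k, x_k), then for k large enough (so that the first-order remainders satisfy Σ λ_i^k o(‖v_k − x_k‖) ≤ ½‖v_k − x_k‖) one has dist(v_k, F(p_k)) = ‖x_k − v_k‖ ≤ 2M·max{0, h_i(p_k, v_k), i ∈ I, |h_i(p_k,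 v_k)|, i ∈ I0}. -/
/-!
Pairing the KKT identity with `v - x` gives `‖x - v‖ = Σ λ_i ⟪g_i, v - x⟫`. Split each term into
`λ_i (h_i v - h_i x)` plus a first-order remainder. Complementary slackness on `I` and `h_i x = 0`
on `I0` bound the first part by `Σ |λ_i| · max {0, h_i v, |h_j v|} ≤ M · max {…}`, and the
remainders contribute at most `½ ‖x - v‖`, which is absorbed into the left-hand side.
-/

open Finset

noncomputable def constraintViolation {ι E : Type*} (h : ι → E → ℝ) (I I0 : Finset ι) (v : E) :
    ℝ :=
  sSup (insert 0 ((fun i => h i v) '' ↑I ∪ (fun i => |h i v|) '' ↑I0))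

section ConstraintViolation

variable {ι E : Type*} (h : ι → E → ℝ) (I I0 : Finset ι) (v : E)

theorem bddAbove_constraintViolation_set :
    BddAbove (insert 0 ((fun i => h i v) '' ↑I ∪ (fun i => |h i v|) '' ↑I0)) :=
  (((I.finite_toSet.image _).union (I0.finite_toSet.image _)).insert 0).bddAbove

theorem constraintViolation_nonneg : 0 ≤ constraintViolation h I I0 v :=
  le_csSup (bddAbove_constraintViolation_set h I I0 v) (Set.mem_insert _ _)

variable {h I I0 v}

theorem le_constraintViolation {i : ι} (hi : i ∈ I) : h i v ≤ constraintViolation h I I0 v :=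
  le_csSup (bddAbove_constraintViolation_set h I I0 v) (.inr (.inl ⟨i, hi, rfl⟩))

theorem abs_le_constraintViolation {i : ι} (hi : i ∈ I0) :
    |h i v| ≤ constraintViolation h I I0 v :=
  le_csSup (bddAbove_constraintViolation_set h I I0 v) (.inr (.inr ⟨i, hi, rfl⟩))

theorem sum_mul_sub_le_mul_constraintViolation [DecidableEq ι] {x : E} {lam : ι → ℝ}
    (hxI0 : ∀ i ∈ I0, h i x = 0) (hcs : ∀ i ∈ I, 0 ≤ lam i ∧ lam i * h i x = 0) :
    ∑ i ∈ I ∪ I0, lam i * (h i v - h i x)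
      ≤ (∑ i ∈ I ∪ I0, |lam i|) * constraintViolation h I I0 v := by
  rw [sum_mul]
  refine sum_le_sum fun i hi => ?_
  rcases mem_union.mp hi with hiI | hiI0
  · obtain ⟨hlam, hslack⟩ := hcs i hiI
    rw [mul_sub, hslack, sub_zero, abs_of_nonneg hlam]
    exact mul_le_mul_of_nonneg_left (le_constraintViolation hiI) hlam
  · rw [hxI0 i hiI0, sub_zero]
    calc lam i * h i v ≤ |lam i| * |h i v| := (le_abs_self _).trans (abs_mul _ _).le
      _ ≤ |lam i| * constraintViolation h I I0 v :=
        mul_le_mul_of_nonneg_left (abs_le_constraintViolation hiI0) (abs_nonneg _)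

end ConstraintViolation

theorem real_inner_neg_eq_norm_of_inv_norm_smul_add_eq_zero {H : Type*} [NormedAddCommGroup H]
    [InnerProductSpace ℝ H] {d w : H} (hdw : ‖d‖⁻¹ • d + w = 0) :
    inner ℝ w (-d) = ‖d‖ := by
  rw [eq_neg_of_add_eq_zero_right hdw, inner_neg_neg, real_inner_smul_left,
    real_inner_self_eq_norm_sq]
  rcases eq_or_ne ‖d‖ 0 with hd | hd
  · simp [hd]
  · field_simp

theorem stmt7_general {H ι : Type*} [NormedAddCommGroup H] [InnerProductSpace ℝ H]
    [DecidableEq ι]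
    (h : ι → H → ℝ) (g : ι → H) (I I0 : Finset ι) (F : Set H)
    (hF : F = {y | (∀ i ∈ I, h i y ≤ 0) ∧ ∀ i ∈ I0, h i y = 0})
    (x v : H) (hxF : x ∈ F)
    (hproj : ‖x - v‖ = Metric.infDist v F)
    (M : ℝ) (lam : ι → ℝ)
    (hkkt : ‖x - v‖⁻¹ • (x - v) + ∑ i ∈ I ∪ I0, lam i • g i = 0)
    (hcs : ∀ i ∈ I, 0 ≤ lam i ∧ lam i * h i x = 0)
    (hbd : ∑ i ∈ I ∪ I0, |lam i| ≤ M)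
    -- the first-order remainders are small: `Σ λ_i · o(‖v − x‖) ≤ ½‖v − x‖`
    (hrem : ∑ i ∈ I ∪ I0, lam i * ((inner ℝ (g i) (v - x) : ℝ) - (h i v - h i x))
      ≤ (1/2) * ‖v - x‖) :
    Metric.infDist v F = ‖x - v‖ ∧
      ‖x - v‖ ≤ 2 * M * sSup (insert (0:ℝ)
        ((fun i => h i v) '' ↑I ∪ (fun i => |h i v|) '' ↑I0)) := by
  refine ⟨hproj.symm, ?_⟩
  have hxI0 : ∀ i ∈ I0, h i x = 0 := (hF ▸ hxF).2
  have hpair : ∑ i ∈ I ∪ I0, lam i * inner ℝ (g i) (v - x) = ‖x - v‖ := by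
    simpa only [neg_sub, sum_inner, real_inner_smul_left] using
      real_inner_neg_eq_norm_of_inv_norm_smul_add_eq_zero hkkt
  have hsplit : ∑ i ∈ I ∪ I0, lam i * inner ℝ (g i) (v - x)
      = ∑ i ∈ I ∪ I0, lam i * (h i v - h i x)
        + ∑ i ∈ I ∪ I0, lam i * (inner ℝ (g i) (v - x) - (h i v - h i x)) := by
    rw [← sum_add_distrib]
    exact sum_congr rfl fun i _ => by ring
  have hlin := sum_mul_sub_le_mul_constraintViolation (v := v) hxI0 hcs
  have hM := mul_le_mul_of_nonneg_right hbd (constraintViolation_nonneg h I I0 v)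
  rw [norm_sub_rev] at hrem
  change ‖x - v‖ ≤ 2 * M * constraintViolation h I I0 v
  linarith

/-- The key inequality estimate in the proof of the criterion of R-regularity: pairing the KKT
identity at a metric projection `x` of `v` with `v − x`, using complementary slackness and the
first-order Taylor remainder bound, yields
`dist(v, F) = ‖x − v‖ ≤ 2M·max{0, h_i(v), i ∈ I, |h_i(v)|, i ∈ I0}`. -/
theorem stmt7 {H ι : Type*} [NormedAddCommGroup H] [InnerProductSpace ℝ H] [CompleteSpace H]
    [Fintype ι] [DecidableEq ι]
    (h : ι → H → ℝ) (g : ι → H) (I I0 : Finset ι) (F : Set H)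
    (hF : F = {y | (∀ i ∈ I, h i y ≤ 0) ∧ ∀ i ∈ I0, h i y = 0})
    (x v : H) (hxF : x ∈ F) (hvF : v ∉ F)
    (hproj : ‖x - v‖ = Metric.infDist v F)
    (M : ℝ) (lam : ι → ℝ)
    (hgrad : ∀ i ∈ I ∪ I0, HasGradientAt (h i) (g i) x)
    (hkkt : ‖x - v‖⁻¹ • (x - v) + ∑ i ∈ I ∪ I0, lam i • g i = 0)
    (hcs : ∀ i ∈ I, 0 ≤ lam i ∧ lam i * h i x = 0)
    (hbd : ∑ i ∈ I ∪ I0, |lam i| ≤ M)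
    -- the first-order remainders are small: `Σ λ_i · o(‖v − x‖) ≤ ½‖v − x‖`
    (hrem : ∑ i ∈ I ∪ I0, lam i * ((inner ℝ (g i) (v - x) : ℝ) - (h i v - h i x))
      ≤ (1/2) * ‖v - x‖) :
    Metric.infDist v F = ‖x - v‖ ∧
      ‖x - v‖ ≤ 2 * M * sSup (insert (0:ℝ)
        ((fun i => h i v) '' ↑I ∪ (fun i => |h i v|) '' ↑I0)) :=
  stmt7_general h g I I0 F hF x v hxF hproj M lam hkkt hcs hbd hrem
end

section
/- (Exact penalization for the value function.) Let F be locally bounded at p0 with F(p) ⊆ Y0 for p ∈ V(p0), and let f be Lipschitz with constant l0 on V(p0) × (Y0 + εB) where ε > 2·diam Y0. Then for every α > l0 and every p ∈ V(p0) with F(p) ≠ ∅: inf{f(p,x) : x ∈ F(p)} = inf{f(p,x) + α·dist(x, F(p)) : x ∈ Y0 + (ε/2)B}. -/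
open Pointwise

/-- Exact penalization for the value function: if `F(p) ⊆ Y0` is nonempty and closed, `Y0` is
bounded, and `f(p,·)` is Lipschitz with constant `l0` on `Y0 + εB` with `ε > 2 diam Y0`, then
for every `α > l0`,
`inf{f(p,x) : x ∈ F(p)} = inf{f(p,x) + α·dist(x, F(p)) : x ∈ Y0 + (ε/2)B}`. -/
theorem stmt9 {G H : Type*} [NormedAddCommGroup G] [NormedSpace ℝ G]
    [NormedAddCommGroup H] [NormedSpace ℝ H]
    (F : G → Set H) (f : G → H → ℝ)
    (Y0 : Set H) (hY0 : Bornology.IsBounded Y0)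
    (p0 : G) (U0 : Set G) (hU0 : U0 ∈ nhds p0)
    (hFY : ∀ p ∈ U0, F p ⊆ Y0)
    (hclosed : ∀ p ∈ U0, IsClosed (F p))
    (ε l0 : ℝ) (hε : 2 * Metric.diam Y0 < ε) (hl0 : 0 ≤ l0)
    (hLip : ∀ p ∈ U0, ∀ x ∈ Y0 + Metric.ball (0:H) ε, ∀ y ∈ Y0 + Metric.ball (0:H) ε,
      |f p x - f p y| ≤ l0 * ‖x - y‖) :
    ∀ α > l0, ∀ p ∈ U0, (F p).Nonempty →
      sInf (f p '' F p) =
        sInf ((fun x => f p x + α * Metric.infDist x (F p)) ''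
          (Y0 + Metric.ball (0:H) (ε / 2))) := by
  intro α hα p hp hne
  have hεpos : 0 < ε := lt_of_le_of_lt (by positivity) hε
  have hSY : F p ⊆ Y0 := hFY p hp
  obtain ⟨s0, hs0⟩ := hne
  have hY0T : Y0 ⊆ Y0 + Metric.ball (0:H) (ε/2) := by
    intro y hy
    have : y + 0 ∈ Y0 + Metric.ball (0:H) (ε/2) :=
      Set.add_mem_add hy (Metric.mem_ball_self (by linarith))
    simpa using this
  have hTsub : Y0 + Metric.ball (0:H) (ε/2) ⊆ Y0 + Metric.ball (0:H) ε :=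
    Set.add_subset_add_left (Metric.ball_subset_ball (by linarith))
  have hY0E : Y0 ⊆ Y0 + Metric.ball (0:H) ε := by
    intro y hy
    have : y + 0 ∈ Y0 + Metric.ball (0:H) ε :=
      Set.add_mem_add hy (Metric.mem_ball_self hεpos)
    simpa using this
  -- f p '' F p is bounded below
  have hbddA : BddBelow (f p '' F p) := by
    refine ⟨f p s0 - l0 * Metric.diam Y0, ?_⟩
    rintro _ ⟨s, hs, rfl⟩
    have h1 : |f p s - f p s0| ≤ l0 * ‖s - s0‖ :=
      hLip p hp s (hY0E (hSY hs)) s0 (hY0E (hSY hs0))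
    have h2 : ‖s - s0‖ ≤ Metric.diam Y0 := by
      rw [← dist_eq_norm]
      exact Metric.dist_le_diam_of_mem hY0 (hSY hs) (hSY hs0)
    have h3 := abs_le.mp h1
    nlinarith [mul_le_mul_of_nonneg_left h2 hl0]
  -- key inequality
  have key : ∀ x ∈ Y0 + Metric.ball (0:H) (ε/2),
      sInf (f p '' F p) ≤ f p x + α * Metric.infDist x (F p) := by
    intro x hx
    refine le_of_forall_pos_le_add ?_
    intro δ hδ
    set δ' := δ / (l0 + 1) with hδ'def
    have hδ'pos : 0 < δ' := by positivity
    have hld : l0 * δ' ≤ δ := by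
      have h : δ' * (l0 + 1) = δ := div_mul_cancel₀ _ (by positivity)
      nlinarith
    have hlt : Metric.infDist x (F p) < Metric.infDist x (F p) + δ' := by linarith
    obtain ⟨s, hs, hds⟩ := (Metric.infDist_lt_iff ⟨s0, hs0⟩).mp hlt
    have hsInf : sInf (f p '' F p) ≤ f p s := csInf_le hbddA ⟨s, hs, rfl⟩
    have h1 : |f p s - f p x| ≤ l0 * ‖s - x‖ :=
      hLip p hp s (hY0E (hSY hs)) x (hTsub hx)
    have h2 : ‖s - x‖ = dist x s := by rw [← dist_eq_norm, dist_comm]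
    have h3 := (abs_le.mp h1).2
    rw [h2] at h3
    have h4 : 0 ≤ Metric.infDist x (F p) := Metric.infDist_nonneg
    nlinarith [mul_le_mul_of_nonneg_left hds.le hl0,
      mul_le_mul_of_nonneg_right hα.le h4]
  have hbddB : BddBelow ((fun x => f p x + α * Metric.infDist x (F p)) ''
      (Y0 + Metric.ball (0:H) (ε / 2))) := by
    refine ⟨sInf (f p '' F p), ?_⟩
    rintro _ ⟨x, hx, rfl⟩
    exact key x hx
  refine le_antisymm ?_ ?_
  · refine le_csInf ⟨_, ⟨s0, hY0T (hSY hs0), rfl⟩⟩ ?_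
    rintro _ ⟨x, hx, rfl⟩
    exact key x hx
  · refine le_csInf (Set.Nonempty.image _ ⟨s0, hs0⟩) ?_
    rintro _ ⟨s, hs, rfl⟩
    have h0 : Metric.infDist s (F p) = 0 := Metric.infDist_zero_of_mem hs
    have hle := csInf_le hbddB ⟨s, hY0T (hSY hs), rfl⟩
    simpa [h0] using hle
end

section
/- Let (p0, x0) be a local solution of the bilevel problem min G(p,x) over p ∈ P, x ∈ S(p) = {x ∈ F(p) : f(p,x) ≤ φ(p)}, where φ(p) = inf{f(p,x) : x ∈ F(p)}. Define D = {(p,x) : h_i(p,x) ≤ 0, i ∈ I; g_j(p) ≤ 0, j ∈ J}, C = {(p,x) ∈ D : f(p,x) − φ(p) ≤ 0}, and C(p) = {x : (p,x) ∈ C}. Assume: (i) G is Lipschitz on D with constant l0; (ii) there exist M > 0 and a neighborhood V of (p0,x0) such that dist(x, C(p)) ≤ M·max{0, f(p,x) − φ(p)} for (p,x) ∈ D ∩ V (R-regularity of the penalized level-set mapping); (iii) dist(x, C(p)) ≥ dist((p,x), C) for all (p,x) ∈ D. Then there exists μ0 = l0·M > 0 such that for every μ > μ0, (p0, x0) is a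 local solution of min{G(p,x) + μ(f(p,x) − φ(p)) : (p,x) ∈ D}. -/
/-- Partial exact penalization for bilevel programs under R-regularity (Theorem 6.1 of the
paper): if `(p0,x0)` is a local solution of the bilevel problem, `G` is Lipschitz on `D` with
constant `l0`, the level-set mapping `p ↦ C(p)` is R-regular (hypothesis (ii)), and the
slice-distance inequality (iii) holds, then for every `μ > l0·M`, `(p0,x0)` is a local solution
of `min{G(p,x) + μ(f(p,x) − φ(p)) : (p,x) ∈ D}`. -/
theorem stmt11 {G H ιI ιJ : Type*}
    [NormedAddCommGroup G] [NormedSpace ℝ G] [FiniteDimensional ℝ G]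
    [NormedAddCommGroup H] [NormedSpace ℝ H] [FiniteDimensional ℝ H]
    [Fintype ιI] [Fintype ιJ]
    (h : ιI → G → H → ℝ) (g : ιJ → G → ℝ) (f : G → H → ℝ) (Gf : G → H → ℝ)
    (F : G → Set H) (hFdef : ∀ p, F p = {x | ∀ i, h i p x ≤ 0})
    (P : Set G) (hPdef : P = {p | ∀ j, g j p ≤ 0})
    (φ : G → ℝ) (hφdef : ∀ p, φ p = sInf (f p '' F p))
    (hφle : ∀ p, ∀ x ∈ F p, φ p ≤ f p x)
    (D C : Set (G × H))
    (hDdef : D = {z | (∀ i, h i z.1 z.2 ≤ 0) ∧ ∀ j, g j z.1 ≤ 0})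
    (hCdef : C = {z ∈ D | f z.1 z.2 - φ z.1 ≤ 0})
    (p0 : G) (x0 : H)
    -- (p0,x0) is a feasible point of the bilevel problem
    (hx0F : x0 ∈ F p0) (hp0P : p0 ∈ P) (hx0S : f p0 x0 ≤ φ p0)
    -- (p0,x0) is a local solution of the bilevel problem
    (hloc : ∃ U ∈ nhds (p0, x0), ∀ z ∈ U,
      z.1 ∈ P → z.2 ∈ F z.1 → f z.1 z.2 ≤ φ z.1 → Gf p0 x0 ≤ Gf z.1 z.2)
    -- (i) G is Lipschitz on D with constant l0
    (l0 : ℝ) (hl0 : 0 < l0)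
    (hGLip : ∀ z ∈ D, ∀ w ∈ D, |Gf z.1 z.2 - Gf w.1 w.2| ≤ l0 * ‖z - w‖)
    -- (ii) R-regularity of the penalized level-set mapping p ↦ C(p)
    (M : ℝ) (hM : 0 < M) (V : Set (G × H)) (hV : V ∈ nhds (p0, x0))
    (hreg : ∀ z ∈ D ∩ V,
      Metric.infDist z.2 {x | (z.1, x) ∈ C} ≤ M * max 0 (f z.1 z.2 - φ z.1))
    -- (iii) slice-distance inequality
    (hslice : ∀ z ∈ D, Metric.infDist z C ≤ Metric.infDist z.2 {x | (z.1, x) ∈ C}) :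
    ∀ μ : ℝ, l0 * M < μ → ∃ W ∈ nhds (p0, x0), ∀ z ∈ W, z ∈ D →
      Gf p0 x0 + μ * (f p0 x0 - φ p0) ≤ Gf z.1 z.2 + μ * (f z.1 z.2 - φ z.1) := by
  intro μ hμ
  have hμpos : 0 < μ := lt_trans (by positivity) hμ
  have h00 : f p0 x0 - φ p0 = 0 :=
    le_antisymm (by linarith) (by linarith [hφle p0 x0 hx0F])
  obtain ⟨U, hU, hUloc⟩ := hloc
  have hUV : U ∩ V ∈ nhds (p0, x0) := Filter.inter_mem hU hV
  obtain ⟨R, hRpos, hball⟩ := Metric.mem_nhds_iff.mp hUV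
  set δ : ℝ := R / (2 * (M + 1)) with hδdef
  have hδpos : 0 < δ := by positivity
  set r : ℝ := min (R / 2) (μ * δ / l0) with hrdef
  have hrpos : 0 < r := lt_min (by positivity) (by positivity)
  have hz0D : (p0, x0) ∈ D := by
    rw [hDdef]
    exact ⟨fun i => (hFdef p0 ▸ hx0F) i, fun j => (hPdef ▸ hp0P) j⟩
  have hz0C : (p0, x0) ∈ C := by
    rw [hCdef]; exact ⟨hz0D, by simpa using h00.le⟩
  refine ⟨Metric.ball (p0, x0) r, Metric.ball_mem_nhds _ hrpos, ?_⟩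
  intro z hzW hzD
  have hzr : dist z (p0, x0) < r := Metric.mem_ball.mp hzW
  have hrR : r ≤ R / 2 := min_le_left _ _
  have hzR : z ∈ Metric.ball (p0, x0) R :=
    Metric.mem_ball.mpr (by linarith)
  have hzU : z ∈ U := (hball hzR).1
  have hzV : z ∈ V := (hball hzR).2
  have hzF : z.2 ∈ F z.1 := by
    rw [hFdef]; exact fun i => (hDdef ▸ hzD : _).1 i
  have hzP : z.1 ∈ P := by
    rw [hPdef]; exact fun j => (hDdef ▸ hzD : _).2 j
  have htnn : 0 ≤ f z.1 z.2 - φ z.1 := by linarith [hφle z.1 z.2 hzF]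
  rw [h00]
  set t := f z.1 z.2 - φ z.1 with htdef
  rcases eq_or_lt_of_le htnn with h0 | ht
  · have := hUloc z hzU hzP hzF (by linarith)
    rw [← h0]
    linarith
  · by_cases hcase : t < δ
    · -- nontrivial case: find w ∈ C close to z
      have hCne : C.Nonempty := ⟨(p0, x0), hz0C⟩
      have hinf : Metric.infDist z C ≤ M * t := by
        have h1 := hslice z hzD
        have h2 := hreg z ⟨hzD, hzV⟩
        rw [max_eq_right htnn] at h2
        linarith
      set ε : ℝ := min ((μ - l0 * M) * t / l0) t with hεdef
      have hεpos : 0 < ε := lt_min (div_pos (mul_pos (by linarith) ht) hl0) ht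
      have hεt : ε ≤ t := min_le_right _ _
      have hε1 : ε * l0 ≤ (μ - l0 * M) * t :=
        (le_div_iff₀ hl0).mp (min_le_left _ _)
      have hlt : Metric.infDist z C < M * t + ε := by linarith
      obtain ⟨w, hwC, hwd⟩ := (Metric.infDist_lt_iff hCne).mp hlt
      have hwD : w ∈ D := (hCdef ▸ hwC : _).1
      have hwfe : f w.1 w.2 - φ w.1 ≤ 0 := (hCdef ▸ hwC : _).2
      have hwF : w.2 ∈ F w.1 := by
        rw [hFdef]; exact fun i => (hDdef ▸ hwD : _).1 i
      have hwP : w.1 ∈ P := by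
        rw [hPdef]; exact fun j => (hDdef ▸ hwD : _).2 j
      have hwU : w ∈ U := by
        have htri : dist w (p0, x0) ≤ dist w z + dist z (p0, x0) :=
          dist_triangle _ _ _
        have hdwz : dist w z < M * t + ε := by
          rw [dist_comm]; exact hwd
        have hMt : M * t + ε < (M + 1) * δ := by nlinarith
        have hMδ : (M + 1) * δ = R / 2 := by
          rw [hδdef]; field_simp
        have : dist w (p0, x0) < R := by linarith
        exact (hball (Metric.mem_ball.mpr this)).1
      have hle := hUloc w hwU hwP hwF (by linarith)
      have hlip := hGLip z hzD w hwD
      rw [← dist_eq_norm] at hlip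
      have habs := abs_le.mp hlip
      have hld : l0 * dist z w ≤ l0 * (M * t + ε) :=
        mul_le_mul_of_nonneg_left hwd.le hl0.le
      nlinarith [habs.1, habs.2]
    · -- trivial case: t ≥ δ
      push_neg at hcase
      have hlip := hGLip z hzD (p0, x0) hz0D
      rw [← dist_eq_norm] at hlip
      have habs := abs_le.mp hlip
      have hr2 : r ≤ μ * δ / l0 := min_le_right _ _
      have hl0r : l0 * r ≤ μ * δ := by
        rw [mul_comm]
        exact (le_div_iff₀ hl0).mp hr2
      have hld : l0 * dist z (p0, x0) ≤ l0 * r :=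
        mul_le_mul_of_nonneg_left hzr.le hl0.le
      have hμt : μ * δ ≤ μ * t := mul_le_mul_of_nonneg_left hcase hμpos.le
      simp only [] at habs
      nlinarith [habs.1, habs.2]
end

section
/- If the constraint mapping F satisfies RCRCQ at (p0, x0) ∈ gr F (i.e., for every index subset K of the active inequality constraints, the rank of {∇_x h_i(p,x) : i ∈ I0 ∪ K} is constant on a neighborhood of (p0,x0)), then there is a neighborhood of (p0, x0) such that F satisfies RCRCQ at every point (p, x) ∈ gr F in that neighborhood. -/
/-- If `F` satisfies RCRCQ at `(p0, x0) ∈ gr F`, then `F` satisfies RCRCQ at every point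
`(p, x) ∈ gr F` in some neighbourhood of `(p0, x0)`. Here RCRCQ at `(p,x)` means: for every
subset `K` of the active inequality constraints at `(p,x)`, the rank of
`{∇ₓh_i : i ∈ I0 ∪ K}` is constant near `(p,x)`. -/
theorem stmt12 {G H ι : Type*} [NormedAddCommGroup G] [NormedSpace ℝ G]
    [NormedAddCommGroup H] [InnerProductSpace ℝ H] [Fintype ι] [DecidableEq ι]
    (h : ι → G → H → ℝ) (g : ι → G → H → H) (I I0 : Finset ι)
    (hcont : ∀ i, Continuous fun z : G × H => h i z.1 z.2)
    (gcont : ∀ i, Continuous fun z : G × H => g i z.1 z.2)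
    (F : G → Set H)
    (hF : ∀ p, F p = {x | (∀ i ∈ I, h i p x ≤ 0) ∧ (∀ i ∈ I0, h i p x = 0)})
    (p0 : G) (x0 : H) (hx0 : x0 ∈ F p0)
    -- RCRCQ at (p0, x0)
    (hRCRCQ : ∀ K : Finset ι, K ⊆ I → (∀ i ∈ K, h i p0 x0 = 0) →
      ∃ U ∈ nhds (p0, x0), ∀ z ∈ U,
        Module.finrank ℝ (Submodule.span ℝ ((fun i => g i z.1 z.2) '' ↑(I0 ∪ K))) =
        Module.finrank ℝ (Submodule.span ℝ ((fun i => g i p0 x0) '' ↑(I0 ∪ K)))) :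
    -- RCRCQ holds at every nearby point of the graph
    ∃ U ∈ nhds (p0, x0), ∀ z ∈ U, z.2 ∈ F z.1 →
      ∀ K : Finset ι, K ⊆ I → (∀ i ∈ K, h i z.1 z.2 = 0) →
        ∃ V ∈ nhds z, ∀ w ∈ V,
          Module.finrank ℝ (Submodule.span ℝ ((fun i => g i w.1 w.2) '' ↑(I0 ∪ K))) =
          Module.finrank ℝ (Submodule.span ℝ ((fun i => g i z.1 z.2) '' ↑(I0 ∪ K))) := by
  classical
  -- For each K, pick a neighborhood where the rank is constant (or univ if K irrelevant)
  have key : ∀ K : Finset ι, ∃ U ∈ nhds (p0, x0),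
      (K ⊆ I → (∀ i ∈ K, h i p0 x0 = 0) → ∀ z ∈ U,
        Module.finrank ℝ (Submodule.span ℝ ((fun i => g i z.1 z.2) '' ↑(I0 ∪ K))) =
        Module.finrank ℝ (Submodule.span ℝ ((fun i => g i p0 x0) '' ↑(I0 ∪ K)))) := by
    intro K
    by_cases hK : K ⊆ I ∧ (∀ i ∈ K, h i p0 x0 = 0)
    · obtain ⟨U, hU, hU2⟩ := hRCRCQ K hK.1 hK.2
      exact ⟨U, hU, fun _ _ => hU2⟩
    · exact ⟨Set.univ, Filter.univ_mem, fun h1 h2 => absurd ⟨h1, h2⟩ hK⟩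
  choose W hW hWrank using key
  -- strictly inactive constraints remain strictly negative near (p0,x0)
  set S : ι → Set (G × H) := fun i => {z | h i p0 x0 < 0 → h i z.1 z.2 < 0} with hS
  have hSmem : ∀ i, S i ∈ nhds (p0, x0) := by
    intro i
    by_cases hi : h i p0 x0 < 0
    · have : IsOpen {z : G × H | h i z.1 z.2 < 0} :=
        isOpen_lt (hcont i) continuous_const
      exact Filter.mem_of_superset (this.mem_nhds hi) fun z hz _ => hz
    · exact Filter.mem_of_superset Filter.univ_mem fun z _ hlt => absurd hlt hi
  refine ⟨(⋂ K : Finset ι, interior (W K)) ∩ ⋂ i, S i, ?_, ?_⟩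
  · exact Filter.inter_mem
      (Filter.iInter_mem.2 fun K => interior_mem_nhds.2 (hW K))
      (Filter.iInter_mem.2 hSmem)
  · rintro z ⟨hz1, hz2⟩ hzF K hKI hKact
    have hz1' : ∀ K : Finset ι, z ∈ interior (W K) := by
      simpa using Set.mem_iInter.1 hz1
    have hz2' : ∀ i, z ∈ S i := Set.mem_iInter.1 hz2
    -- K is active at (p0,x0)
    have hKact0 : ∀ i ∈ K, h i p0 x0 = 0 := by
      intro i hi
      have hle : h i p0 x0 ≤ 0 := by
        rw [hF] at hx0; exact hx0.1 i (hKI hi)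
      rcases lt_or_eq_of_le hle with hlt | heq
      · exact absurd (hKact i hi) (ne_of_lt (hz2' i hlt))
      · exact heq
    have hrank := hWrank K hKI hKact0
    have hzW : z ∈ W K := interior_subset (hz1' K)
    refine ⟨interior (W K), (isOpen_interior).mem_nhds (hz1' K), fun w hw => ?_⟩
    rw [hrank w (interior_subset hw), hrank z hzW]
end

section
/- Suppose F is R-regular at (p0, x0) ∈ gr F relative to dom F, and each h_i is Lipschitz in p uniformly near (p0, x0) with constant l. Then F is lower semicontinuous at (p0, x0) relative to dom F: for every ε > 0 there is η > 0 such that F(p) ∩ B(x0, ε) ≠ ∅ for all p ∈ dom F with ‖p − p0‖ < η. -/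
/-- If `F` is R-regular at `(p0,x0) ∈ gr F` relative to dom F and the `h_i` are Lipschitz in
`p` uniformly near `(p0, x0)` with constant `l`, then `F` is lower semicontinuous at
`(p0, x0)` relative to dom F. -/
theorem stmt14 {G H ι : Type*} [NormedAddCommGroup G] [NormedSpace ℝ G]
    [NormedAddCommGroup H] [InnerProductSpace ℝ H] [Fintype ι] [DecidableEq ι]
    (h : ι → G → H → ℝ) (I I0 : Finset ι)
    (F : G → Set H)
    (hF : ∀ p, F p = {x | (∀ i ∈ I, h i p x ≤ 0) ∧ (∀ i ∈ I0, h i p x = 0)})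
    (p0 : G) (x0 : H) (hx0 : x0 ∈ F p0)
    -- R-regularity at (p0,x0) relative to dom F
    (M : ℝ) (hM : 0 < M) (U : Set G) (hU : U ∈ nhds p0) (V : Set H) (hV : V ∈ nhds x0)
    (hreg : ∀ x ∈ V, ∀ p ∈ U, (F p).Nonempty →
      Metric.infDist x (F p) ≤ M * constraintMax h I I0 p x)
    -- the h_i are Lipschitz in p near p0 with constant l
    (l : ℝ) (hl : 0 < l) (δ0 : ℝ) (hδ0 : 0 < δ0)
    (hLip : ∀ i ∈ I ∪ I0, ∀ p : G, ‖p - p0‖ < δ0 →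
      |h i p x0 - h i p0 x0| ≤ l * ‖p - p0‖) :
    ∀ ε > (0:ℝ), ∃ η > (0:ℝ), ∀ p : G, (F p).Nonempty → ‖p - p0‖ < η →
      (F p ∩ Metric.ball x0 ε).Nonempty := by
  intro ε hε
  obtain ⟨r, hr, hrU⟩ := Metric.mem_nhds_iff.mp hU
  have hx0V : x0 ∈ V := mem_of_mem_nhds hV
  have hx0' : (∀ i ∈ I, h i p0 x0 ≤ 0) ∧ (∀ i ∈ I0, h i p0 x0 = 0) := by
    rw [hF] at hx0; exact hx0
  refine ⟨min (min r δ0) (ε / (M * l)), by positivity, fun p hFp hp => ?_⟩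
  have hpr : ‖p - p0‖ < r := lt_of_lt_of_le hp (le_trans (min_le_left _ _) (min_le_left _ _))
  have hpδ : ‖p - p0‖ < δ0 := lt_of_lt_of_le hp (le_trans (min_le_left _ _) (min_le_right _ _))
  have hpε : ‖p - p0‖ < ε / (M * l) := lt_of_lt_of_le hp (min_le_right _ _)
  have hpU : p ∈ U := hrU (by simpa [Metric.mem_ball, dist_eq_norm] using hpr)
  have hbound : constraintMax h I I0 p x0 ≤ l * ‖p - p0‖ := by
    apply Real.sSup_le
    · intro x hx
      rcases hx with hx | hx | hx
      · subst hx; positivity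
      · obtain ⟨i, hi, rfl⟩ := hx
        have h1 := hLip i (Finset.mem_union_left _ hi) p hpδ
        have h2 := hx0'.1 i hi
        have := abs_le.mp h1
        linarith [this.2]
      · obtain ⟨i, hi, rfl⟩ := hx
        have h1 := hLip i (Finset.mem_union_right _ hi) p hpδ
        have h2 := hx0'.2 i hi
        rw [h2, sub_zero] at h1
        exact h1
    · positivity
  have hdist : Metric.infDist x0 (F p) < ε := by
    calc Metric.infDist x0 (F p) ≤ M * constraintMax h I I0 p x0 := hreg x0 hx0V p hpU hFp
      _ ≤ M * (l * ‖p - p0‖) := by nlinarith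
      _ < ε := by
          rw [← mul_assoc]
          have hMl : 0 < M * l := by positivity
          calc M * l * ‖p - p0‖ < M * l * (ε / (M * l)) := by
                exact mul_lt_mul_of_pos_left hpε hMl
            _ = ε := by field_simp
  obtain ⟨y, hy, hdy⟩ := (Metric.infDist_lt_iff hFp).mp hdist
  exact ⟨y, hy, by simpa [Metric.mem_ball, dist_comm] using hdy⟩
end

section
/- For the mapping F(p) = {x ∈ ℝ² : |x₁| ≤ 1, |x₂| ≤ 1, x₂ − p·x₁ + |p| + 1 ≤ 0} with p ∈ ℝ: F(p) = {(1, −1)} for p > 0, F(p) = {(−1, −1)} for p < 0, and F(0) = {(x₁, −1) : −1 ≤ x₁ ≤ 1}; consequently F is not lower semicontinuous at (0, (0, −1)), and F is not R-regular at (0, (0, −1)): for every M > 0 and every pair of neighborhoods of 0 and (0,−1) there exist p and x in them with dist(x, F(p)) > M·max{0, |x₁| − 1, |x₂| − 1, x₂ − p·x₁ + |p| + 1}. -/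
/-- The set-valued mapping of Example 3.1 of the paper. -/
def Fex : ℝ → Set (ℝ × ℝ) :=
  fun p => {x | |x.1| ≤ 1 ∧ |x.2| ≤ 1 ∧ x.2 - p * x.1 + |p| + 1 ≤ 0}

lemma Fex_pos (p : ℝ) (hp : 0 < p) : Fex p = {((1:ℝ), (-1:ℝ))} := by
  ext x
  simp only [Fex, Set.mem_setOf_eq, Set.mem_singleton_iff, abs_of_pos hp]
  constructor
  · rintro ⟨h1, h2, h3⟩
    rw [abs_le] at h1 h2
    have hx1 : x.1 = 1 := by nlinarith [h1.1, h1.2, h2.1]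
    have hx2 : x.2 = -1 := by nlinarith [h2.1]
    exact Prod.ext hx1 hx2
  · rintro rfl
    norm_num

lemma Fex_neg (p : ℝ) (hp : p < 0) : Fex p = {((-1:ℝ), (-1:ℝ))} := by
  ext x
  simp only [Fex, Set.mem_setOf_eq, Set.mem_singleton_iff, abs_of_neg hp]
  constructor
  · rintro ⟨h1, h2, h3⟩
    rw [abs_le] at h1 h2
    have hx1 : x.1 = -1 := by nlinarith [h1.1, h1.2, h2.1]
    have hx2 : x.2 = -1 := by nlinarith [h2.1]
    exact Prod.ext hx1 hx2
  · rintro rfl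
    norm_num

/-- Example 3.1: the explicit description of `Fex`, the failure of lower semicontinuity of
`Fex` at `(0, (0,−1))`, and the failure of R-regularity of `Fex` at `(0, (0,−1))`. -/
theorem stmt15 :
    (∀ p : ℝ, 0 < p → Fex p = {((1:ℝ), (-1:ℝ))}) ∧
    (∀ p : ℝ, p < 0 → Fex p = {((-1:ℝ), (-1:ℝ))}) ∧
    (Fex 0 = {x : ℝ × ℝ | |x.1| ≤ 1 ∧ x.2 = -1}) ∧
    -- Fex is not lower semicontinuous at (0, (0, -1))
    ¬ (∀ ε > (0:ℝ), ∃ δ > (0:ℝ), ∀ p : ℝ, |p| < δ →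
        (Fex p ∩ Metric.ball (((0:ℝ), (-1:ℝ))) ε).Nonempty) ∧
    -- Fex is not R-regular at (0, (0, -1))
    (∀ M > (0:ℝ), ∀ δ > (0:ℝ), ∀ ε > (0:ℝ), ∃ p : ℝ, ∃ x : ℝ × ℝ,
      |p| < δ ∧ dist x (((0:ℝ), (-1:ℝ))) < ε ∧
      Metric.infDist x (Fex p) >
        M * max 0 (max (|x.1| - 1) (max (|x.2| - 1) (x.2 - p * x.1 + |p| + 1)))) := by
  refine ⟨fun p hp => Fex_pos p hp, fun p hp => Fex_neg p hp, ?_, ?_, ?_⟩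
  · ext x
    simp only [Fex, Set.mem_setOf_eq, abs_zero]
    constructor
    · rintro ⟨h1, h2, h3⟩
      rw [abs_le] at h2
      exact ⟨h1, by linarith [h2.1]⟩
    · rintro ⟨h1, h2⟩
      rw [h2]
      norm_num [h1]
  · intro h
    obtain ⟨δ, hδ, hball⟩ := h (1/2) (by norm_num)
    have hpd : |δ/2| < δ := by rw [abs_of_pos (by linarith)]; linarith
    obtain ⟨x, hx, hxb⟩ := hball (δ/2) hpd
    rw [Fex_pos _ (by linarith)] at hx
    rw [Set.mem_singleton_iff] at hx
    subst hx
    rw [Metric.mem_ball, Prod.dist_eq] at hxb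
    simp [Real.dist_eq] at hxb
    linarith
  · intro M hM δ hδ ε hε
    set p : ℝ := min δ (1/M) / 2 with hp
    have hp0 : 0 < p := by
      have := lt_min hδ (by positivity : (0:ℝ) < 1/M)
      positivity
    refine ⟨p, ((0:ℝ), (-1:ℝ)), ?_, ?_, ?_⟩
    · rw [abs_of_pos hp0]
      have : min δ (1/M) ≤ δ := min_le_left _ _
      linarith
    · simp [Prod.dist_eq, Real.dist_eq]
      positivity
    · rw [Fex_pos p hp0, Metric.infDist_singleton, Prod.dist_eq]
      simp only [Real.dist_eq]
      norm_num
      rw [abs_of_pos hp0]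
      rw [max_eq_right (by linarith : (-1:ℝ) ≤ p)]
      have hpM : p < 1/M := by
        have : min δ (1/M) ≤ 1/M := min_le_right _ _
        linarith
      calc M * p < M * (1/M) := by exact (mul_lt_mul_iff_right₀ hM).mpr hpM
        _ = 1 := by field_simp
end

section
/- If every point x in a bounded set Y0 ⊆ H admits, for all p near p0, the estimate dist(x, F(p)) ≤ M·max{0, h_i(p,x), i ∈ I, |h_i(p,x)|, i ∈ I0}, and each h_i is Lipschitz in p with constant l_i on V(p0) × Y0, then for all p, p̃ ∈ V(p0) ∩ dom F and all x̃ ∈ F(p̃) ∩ Y0: dist(x̃, F(p)) ≤ M·(max_i l_i)·‖p − p̃‖. -/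
/-- The core computation in the proof that R-regularity implies pseudo-Lipschitz continuity:
if the R-regularity estimate holds at all points of `Y0` for parameters near `p0`, and the
`h_i` are Lipschitz in `p` with constants `l_i ≤ lmax` on `V(p0) × Y0`, then for all
`p, p̃ ∈ V(p0) ∩ dom F` and `x̃ ∈ F(p̃) ∩ Y0` we have
`dist(x̃, F(p)) ≤ M·lmax·‖p − p̃‖`. -/
theorem stmt16 {G H ι : Type*} [NormedAddCommGroup G] [NormedSpace ℝ G]
    [NormedAddCommGroup H] [InnerProductSpace ℝ H] [Fintype ι] [DecidableEq ι]
    (h : ι → G → H → ℝ) (I I0 : Finset ι)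
    (F : G → Set H)
    (hF : ∀ p, F p = {x | (∀ i ∈ I, h i p x ≤ 0) ∧ (∀ i ∈ I0, h i p x = 0)})
    (Y0 : Set H) (p0 : G) (U0 : Set G) (hU0 : U0 ∈ nhds p0)
    (M : ℝ) (hM : 0 < M)
    (hreg : ∀ x ∈ Y0, ∀ p ∈ U0, (F p).Nonempty →
      Metric.infDist x (F p) ≤ M * constraintMax h I I0 p x)
    (l : ι → ℝ)
    (hLip : ∀ i ∈ I ∪ I0, ∀ p ∈ U0, ∀ q ∈ U0, ∀ x ∈ Y0,
      |h i p x - h i q x| ≤ l i * ‖p - q‖)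
    (lmax : ℝ) (hlmax0 : 0 ≤ lmax) (hlmax : ∀ i ∈ I ∪ I0, l i ≤ lmax) :
    ∀ p ∈ U0, ∀ p' ∈ U0, (F p).Nonempty → (F p').Nonempty →
      ∀ x' ∈ F p' ∩ Y0, Metric.infDist x' (F p) ≤ M * lmax * ‖p - p'‖ := by
  intro p hp p' hp' hFp hFp' x' hx'
  obtain ⟨hx'F, hx'Y⟩ := hx'
  rw [hF p'] at hx'F
  obtain ⟨hle, heq⟩ := hx'F
  have key : constraintMax h I I0 p x' ≤ lmax * ‖p - p'‖ := by
    apply Real.sSup_le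
    · intro y hy
      rcases hy with rfl | hy
      · positivity
      rcases hy with ⟨i, hi, rfl⟩ | ⟨i, hi, rfl⟩
      · have hi' : i ∈ I ∪ I0 := Finset.mem_union_left _ hi
        have := hLip i hi' p hp p' hp' x' hx'Y
        have h1 : h i p x' ≤ h i p' x' + l i * ‖p - p'‖ := by
          have := abs_le.mp this
          linarith [this.2]
        have h2 := hle i hi
        have h3 : l i * ‖p - p'‖ ≤ lmax * ‖p - p'‖ :=
          mul_le_mul_of_nonneg_right (hlmax i hi') (norm_nonneg _)
        linarith
      · have hi' : i ∈ I ∪ I0 := Finset.mem_union_right _ hi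
        have := hLip i hi' p hp p' hp' x' hx'Y
        have h2 := heq i hi
        have h3 : l i * ‖p - p'‖ ≤ lmax * ‖p - p'‖ :=
          mul_le_mul_of_nonneg_right (hlmax i hi') (norm_nonneg _)
        calc |h i p x'| = |h i p x' - h i p' x'| := by rw [h2, sub_zero]
          _ ≤ l i * ‖p - p'‖ := this
          _ ≤ lmax * ‖p - p'‖ := h3
    · positivity
  calc Metric.infDist x' (F p) ≤ M * constraintMax h I I0 p x' :=
        hreg x' hx'Y p hp hFp
    _ ≤ M * (lmax * ‖p - p'‖) := mul_le_mul_of_nonneg_left key hM.le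
    _ = M * lmax * ‖p - p'‖ := by ring
end
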